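/- arXiv:1804.06654 — 9 statements merged into one kernel-verified Lean document; each statement's English description precedes it below -/
import Mathlib

section
/- A numerical semigroup S is symmetric if and only if l(S) = 0. -/
def IsNumericalSemigroup (S : Set ℕ) : Prop :=
  0 ∈ S ∧ (∀ a ∈ S, ∀ b ∈ S, a + b ∈ S) ∧ Sᶜ.Finite

noncomputable def frobNS (S : Set ℕ) : ℤ :=
  sSup (insert (-1) ((fun n : ℕ => (n : ℤ)) '' Sᶜ))

def toZNS (S : Set ℕ) : Set ℤ := {z : ℤ | ∃ n ∈ S, (n : ℤ) = z}

noncomputable def genusNS (S : Set ℕ) : ℕ := Sᶜ.ncard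

def smallNS (S : Set ℕ) : Set ℕ := {s ∈ S | (s : ℤ) < frobNS S}

noncomputable def nNS (S : Set ℕ) : ℕ := (smallNS S).ncard

def LgapsNS (S : Set ℕ) : Set ℕ :=
  {x : ℕ | x ∉ S ∧ frobNS S - (x : ℤ) ∉ toZNS (smallNS S)}

noncomputable def lNS (S : Set ℕ) : ℕ := (LgapsNS S).ncard

noncomputable def hNS (S : Set ℕ) : ℕ := sSup (LgapsNS S)

def PFNS (S : Set ℕ) : Set ℤ :=
  {x : ℤ | x ∉ toZNS S ∧ ∀ s ∈ S, s ≠ 0 → x + (s : ℤ) ∈ toZNS S}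

noncomputable def typeNS (S : Set ℕ) : ℕ := (PFNS S).ncard

def msgNS (S : Set ℕ) : Set ℕ :=
  {x : ℕ | x ∈ S ∧ x ≠ 0 ∧ ∀ a ∈ S, ∀ b ∈ S, a ≠ 0 → b ≠ 0 → a + b ≠ x}

noncomputable def multNS (S : Set ℕ) : ℕ := sInf (S \ {0})

def IsIrreducibleNS (S : Set ℕ) : Prop :=
  IsNumericalSemigroup S ∧
    ¬ ∃ T₁ T₂ : Set ℕ, IsNumericalSemigroup T₁ ∧ IsNumericalSemigroup T₂ ∧
        S ⊂ T₁ ∧ S ⊂ T₂ ∧ S = T₁ ∩ T₂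

def IsSymmetricNS (S : Set ℕ) : Prop := IsIrreducibleNS S ∧ Odd (frobNS S)

def IsPseudoSymmetricNS (S : Set ℕ) : Prop := IsIrreducibleNS S ∧ Even (frobNS S)

def genNS (A : Set ℕ) : Set ℕ := (AddSubmonoid.closure A : Set ℕ)

def IsURSYNS (S : Set ℕ) : Prop :=
  ∃ T : Set ℕ, ∃ x : ℕ, IsSymmetricNS T ∧ x ∈ msgNS T ∧ S = T \ {x}

def IsURPSYNS (S : Set ℕ) : Prop :=
  ∃ T : Set ℕ, ∃ x : ℕ, IsPseudoSymmetricNS T ∧ x ∈ msgNS T ∧ S = T \ {x}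

def deltaNS (S : Set ℕ) : Set ℕ := {s ∈ S | 2 * (s : ℤ) < frobNS S}

def thetaNS (S : Set ℕ) : Set ℕ :=
  genNS (deltaNS S) ∪ {n : ℕ | frobNS S < (n : ℤ)}

noncomputable def CNS (F : ℕ) : Set ℕ :=
  if Odd F then (({0} : Set ℕ) ∪ {n : ℕ | (F + 1) / 2 ≤ n}) \ {F}
  else (({0} : Set ℕ) ∪ {n : ℕ | F / 2 + 1 ≤ n}) \ {F}

lemma frob_mem (S : Set ℕ) (hS : IsNumericalSemigroup S) :
    frobNS S ∈ insert (-1 : ℤ) ((fun n : ℕ => (n : ℤ)) '' Sᶜ) := by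
  apply Set.Nonempty.csSup_mem
  · exact ⟨-1, Set.mem_insert _ _⟩
  · exact (hS.2.2.image _).insert _

lemma frob_ub (S : Set ℕ) (hS : IsNumericalSemigroup S) {x : ℕ} (hx : x ∉ S) :
    (x : ℤ) ≤ frobNS S :=
  le_csSup ((hS.2.2.image _).insert _).bddAbove (Set.mem_insert_of_mem _ ⟨x, hx, rfl⟩)

lemma frob_empty (S : Set ℕ) (h : Sᶜ = ∅) : frobNS S = -1 := by
  unfold frobNS
  rw [h, Set.image_empty]; simp

lemma lgaps_finite (S : Set ℕ) (hS : IsNumericalSemigroup S) : (LgapsNS S).Finite :=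
  hS.2.2.subset (fun _ hx => hx.1)

/-- A numerical semigroup S is symmetric if and only if l(S) = 0. -/
theorem stmt1 (S : Set ℕ) (hS : IsNumericalSemigroup S) :
    IsSymmetricNS S ↔ lNS S = 0 := by
  rw [lNS, Set.ncard_eq_zero (lgaps_finite S hS)]
  by_cases hE : Sᶜ = ∅
  · have hU : S = Set.univ := Set.compl_empty_iff.1 hE
    constructor
    · intro _
      ext x; simp [LgapsNS, hU]
    · intro _
      refine ⟨⟨hS, ?_⟩, ?_⟩
      · rintro ⟨T₁, T₂, _, _, hsub, _, _⟩
        rw [hU] at hsub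
        exact hsub.2 (Set.subset_univ _)
      · rw [frob_empty S hE]; exact ⟨-1, by ring⟩
  · obtain ⟨F, hFS, hFe⟩ : ∃ F : ℕ, F ∉ S ∧ (F : ℤ) = frobNS S := by
      rcases frob_mem S hS with h | ⟨g, hg, hge⟩
      · exfalso
        obtain ⟨g, hg⟩ := Set.nonempty_iff_ne_empty.2 hE
        have := frob_ub S hS hg
        rw [h] at this
        omega
      · exact ⟨g, hg, hge⟩
    have hub : ∀ x, x ∉ S → x ≤ F := fun x hx => by
      have := frob_ub S hS hx; rw [← hFe] at this; exact_mod_cast this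
    have hbig : ∀ n, F < n → n ∈ S := fun n hn => by
      by_contra h; exact absurd (hub n h) (by omega)
    have hF1 : 1 ≤ F := by
      rcases Nat.eq_zero_or_pos F with h | h
      · exact absurd (h ▸ hS.1) hFS
      · exact h
    have hchar : (LgapsNS S = ∅) ↔ ∀ x, x ∉ S → F - x ∈ S := by
      constructor
      · intro hL x hx
        by_contra hFx
        have hmem : x ∈ LgapsNS S := by
          refine ⟨hx, ?_⟩
          rintro ⟨n, ⟨hnS, hnlt⟩, hne⟩
          rw [← hFe] at hnlt hne
          have hxF : x ≤ F := hub x hx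
          have : n = F - x := by omega
          exact hFx (this ▸ hnS)
        rw [hL] at hmem; exact hmem
      · intro h
        ext x
        simp only [Set.mem_empty_iff_false, iff_false]
        rintro ⟨hx, hne⟩
        apply hne
        have hx1 : 1 ≤ x := by
          rcases Nat.eq_zero_or_pos x with h0 | h0
          · exact absurd (h0 ▸ hS.1) hx
          · exact h0
        have hxF : x ≤ F := hub x hx
        refine ⟨F - x, ⟨h x hx, ?_⟩, ?_⟩
        · rw [← hFe]; omega
        · rw [← hFe]; omega
    rw [hchar]
    constructor
    · rintro ⟨⟨_, hirr⟩, hOdd⟩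
      intro x hx
      by_contra hFx
      apply hirr
      have hOddF : Odd F := by rwa [← hFe, Int.odd_coe_nat] at hOdd
      set A : Set ℕ := {y | y ∉ S ∧ F - y ∉ S} with hA
      have hAne : A.Nonempty := ⟨x, hx, hFx⟩
      have hAbdd : BddAbove A := ⟨F, fun y hy => hub y hy.1⟩
      set h := sSup A with hh
      have hhA : h ∈ A := Nat.sSup_mem hAne hAbdd
      have hmax : ∀ y ∈ A, y ≤ h := fun y hy => le_csSup hAbdd hy
      have hhS : h ∉ S := hhA.1
      have hh1 : 1 ≤ h := by
        rcases Nat.eq_zero_or_pos h with h0 | h0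
        · exact absurd (h0 ▸ hS.1) hhS
        · exact h0
      have hhF : h ≤ F := hub h hhS
      have hhFne : h ≠ F := by
        intro he
        apply hhA.2
        rw [he, Nat.sub_self]
        exact hS.1
      have hFhA : F - h ∈ A := ⟨hhA.2, by rw [Nat.sub_sub_self hhF]; exact hhS⟩
      have h2h : F < 2 * h := by
        have hle := hmax _ hFhA
        rcases hOddF with ⟨k, hk⟩
        omega
      have h2hS : 2 * h ∈ S := hbig _ h2h
      have key : ∀ b ∈ S, h + b ∈ insert h S := by
        intro b hb
        rcases Nat.eq_zero_or_pos b with h0 | h0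
        · rw [h0]; exact Set.mem_insert _ _
        by_cases hc : h + b ∈ S
        · exact Set.mem_insert_of_mem _ hc
        · exfalso
          have hle : h + b ≤ F := hub _ hc
          have hmem : h + b ∈ A := by
            refine ⟨hc, fun hcc => ?_⟩
            have h3 : F - (h + b) + b ∈ S := hS.2.1 _ hcc _ hb
            have h4 : F - (h + b) + b = F - h := by omega
            exact hhA.2 (h4 ▸ h3)
          have := hmax _ hmem
          omega
      refine ⟨insert h S, insert F S, ?_, ?_, Set.ssubset_insert hhS, Set.ssubset_insert hFS, ?_⟩
      · refine ⟨Set.mem_insert_of_mem _ hS.1, ?_,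
          hS.2.2.subset (fun y hy hyS => hy (Set.mem_insert_of_mem _ hyS))⟩
        intro a ha b hb
        rcases Set.mem_insert_iff.1 ha with ha' | ha' <;>
          rcases Set.mem_insert_iff.1 hb with hb' | hb'
        · subst ha'; subst hb'
          have he : h + h = 2 * h := by ring
          rw [he]
          exact Set.mem_insert_of_mem _ h2hS
        · subst ha'; exact key b hb'
        · subst hb'; rw [Nat.add_comm]; exact key a ha'
        · exact Set.mem_insert_of_mem _ (hS.2.1 a ha' b hb')
      · refine ⟨Set.mem_insert_of_mem _ hS.1, ?_,
          hS.2.2.subset (fun y hy hyS => hy (Set.mem_insert_of_mem _ hyS))⟩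
        intro a ha b hb
        rcases Set.mem_insert_iff.1 ha with ha' | ha' <;>
          rcases Set.mem_insert_iff.1 hb with hb' | hb'
        · subst ha'; subst hb'
          exact Set.mem_insert_of_mem _ (hbig _ (by omega))
        · subst ha'
          rcases Nat.eq_zero_or_pos b with h0 | h0
          · rw [h0]; exact Set.mem_insert _ _
          · exact Set.mem_insert_of_mem _ (hbig _ (by omega))
        · subst hb'
          rcases Nat.eq_zero_or_pos a with h0 | h0
          · rw [h0, Nat.zero_add]; exact Set.mem_insert _ _
          · exact Set.mem_insert_of_mem _ (hbig _ (by omega))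
        · exact Set.mem_insert_of_mem _ (hS.2.1 a ha' b hb')
      · ext y
        simp only [Set.mem_inter_iff, Set.mem_insert_iff]
        constructor
        · intro hy; exact ⟨Or.inr hy, Or.inr hy⟩
        · rintro ⟨h1 | h1, h2 | h2⟩
          · exact absurd (h1.symm.trans h2) hhFne
          · exact h2
          · exact h1
          · exact h1
    · intro hL
      refine ⟨⟨hS, ?_⟩, ?_⟩
      · rintro ⟨T₁, T₂, hT₁, hT₂, hs₁, hs₂, heq⟩
        have key : ∀ T : Set ℕ, IsNumericalSemigroup T → S ⊂ T → F ∈ T := by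
          intro T hT hsT
          obtain ⟨t, htT, htS⟩ := Set.exists_of_ssubset hsT
          have h1 : F - t ∈ S := hL t htS
          have h2 : t ≤ F := hub t htS
          have h3 := hT.2.1 t htT (F - t) (hsT.1 h1)
          have he : t + (F - t) = F := by omega
          rwa [he] at h3
        have : F ∈ S := heq ▸ ⟨key T₁ hT₁ hs₁, key T₂ hT₂ hs₂⟩
        exact hFS this
      · rw [← hFe, Int.odd_coe_nat]
        rcases Nat.even_or_odd F with he | ho
        · exfalso
          obtain ⟨k, hk⟩ := he
          have hkS : k ∉ S := fun hk0 => hFS (by rw [hk]; exact hS.2.1 k hk0 k hk0)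
          have h1 := hL k hkS
          have h2 : F - k = k := by omega
          exact hkS (h2 ▸ h1)
        · exact ho
end

section
/- A numerical semigroup S is pseudo-symmetric if and only if l(S) = 1. -/
/-!
For a numerical semigroup `S` with Frobenius number `f`, `L(S)` is the set of gaps `x` such that
`f - x` is a gap too, so it is invariant under `x ↦ f - x`. Irreducibility is equivalent to
`L(S) ⊆ {f / 2}`: if so, any numerical semigroup `T ⊋ S` contains a gap `x`, and either `x = f / 2`
or `f - x ∈ S`, so `f ∈ T`; if not, adjoining to `S` the largest element of `L(S)` other than
`f / 2` gives a numerical semigroup, and `S` is its intersection with `S ∪ {f}`. When `f` is even,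
`f / 2 ∈ L(S)`; when `L(S)` is a singleton `{h}`, the symmetry forces `f = 2h`.
-/

section Frobenius

variable {S : Set ℕ} {x n f h : ℕ}

lemma le_frobNS (hS : IsNumericalSemigroup S) (hx : x ∉ S) : (x : ℤ) ≤ frobNS S :=
  le_csSup ((hS.2.2.image _).insert _).bddAbove (Set.mem_insert_of_mem _ ⟨x, hx, rfl⟩)

lemma mem_of_frobNS_lt (hS : IsNumericalSemigroup S) (hn : frobNS S < n) : n ∈ S := by
  by_contra hc
  exact (le_frobNS hS hc).not_gt hn

lemma frobNS_eq_neg_one_or_exists (hS : IsNumericalSemigroup S) :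
    frobNS S = -1 ∨ ∃ f ∉ S, (f : ℤ) = frobNS S := by
  have hmem : frobNS S ∈ insert (-1) ((fun n : ℕ => (n : ℤ)) '' Sᶜ) :=
    Set.Nonempty.csSup_mem ⟨-1, Set.mem_insert _ _⟩ ((hS.2.2.image _).insert _)
  rcases hmem with hF | ⟨f, hf, hfF⟩
  · exact Or.inl hF
  · exact Or.inr ⟨f, hf, hfF⟩

lemma LgapsNS_eq_empty_of_frobNS_eq_neg_one (hS : IsNumericalSemigroup S)
    (hF : frobNS S = -1) : LgapsNS S = ∅ :=
  Set.eq_empty_of_forall_notMem fun x hx => by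
    have := le_frobNS hS hx.1
    omega

lemma isNumericalSemigroup_insert (hS : IsNumericalSemigroup S) (hxx : x + x ∈ S)
    (hxS : ∀ s ∈ S, s ≠ 0 → s + x ∈ S) : IsNumericalSemigroup (insert x S) := by
  have hxS' : ∀ s ∈ S, s + x ∈ insert x S := fun s hs => by
    rcases eq_or_ne s 0 with rfl | hs0
    · simp
    · exact Or.inr (hxS s hs hs0)
  refine ⟨Or.inr hS.1, ?_, hS.2.2.subset (Set.compl_subset_compl.mpr (Set.subset_insert _ _))⟩
  rintro a (rfl | ha) b (rfl | hb)
  · exact Or.inr hxx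
  · exact add_comm b a ▸ hxS' b hb
  · exact hxS' a ha
  · exact Or.inr (hS.2.1 a ha b hb)

variable (hS : IsNumericalSemigroup S) (hf : f ∉ S) (hfF : (f : ℤ) = frobNS S)
include hS hfF

lemma le_of_notMem (hx : x ∉ S) : x ≤ f := by
  exact_mod_cast hfF ▸ le_frobNS hS hx

lemma mem_LgapsNS_iff : x ∈ LgapsNS S ↔ x ∉ S ∧ f - x ∉ S := by
  refine and_congr_right fun hx => not_congr ?_
  have hxf := le_of_notMem hS hfF hx
  have hx0 : x ≠ 0 := fun hx0 => hx (hx0 ▸ hS.1)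
  constructor
  · rintro ⟨n, ⟨hn, -⟩, hnx⟩
    rwa [show f - x = n by omega]
  · intro hfx
    refine ⟨f - x, ⟨hfx, ?_⟩, ?_⟩ <;> omega

lemma sub_mem_LgapsNS (hx : x ∈ LgapsNS S) : f - x ∈ LgapsNS S := by
  rw [mem_LgapsNS_iff hS hfF] at hx ⊢
  rwa [Nat.sub_sub_self (le_of_notMem hS hfF hx.1), and_comm]

lemma notMem_LgapsNS_frob : f ∉ LgapsNS S := by
  simpa [mem_LgapsNS_iff hS hfF] using fun _ => hS.1

include hf in
lemma isNumericalSemigroup_insert_frob : IsNumericalSemigroup (insert f S) := by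
  have hf0 : f ≠ 0 := fun hf0 => hf (hf0 ▸ hS.1)
  exact isNumericalSemigroup_insert hS (mem_of_frobNS_lt hS (by omega))
    fun s _ hs0 => mem_of_frobNS_lt hS (by omega)

/-- If `s + h` were a gap for some `s ∈ S`, then `f - (s + h) ∉ S` (else `f - h ∈ S`), so `s + h`
would be a larger element of `L(S)`. -/
lemma isNumericalSemigroup_insert_of_maximal (hh : h ∈ LgapsNS S) (hhf : f < h + h)
    (hmax : ∀ y ∈ LgapsNS S, y + y ≠ f → y ≤ h) : IsNumericalSemigroup (insert h S) := by
  refine isNumericalSemigroup_insert hS (mem_of_frobNS_lt hS (by omega)) fun s hs hs0 => ?_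
  by_contra hsh
  have hfh := ((mem_LgapsNS_iff hS hfF).mp hh).2
  have hsh' : s + h ∈ LgapsNS S := by
    refine (mem_LgapsNS_iff hS hfF).mpr ⟨hsh, fun hmem => hfh ?_⟩
    have := le_of_notMem hS hfF hsh
    simpa [show f - (s + h) + s = f - h by omega] using hS.2.1 _ hmem s hs
  have := hmax _ hsh' (by omega)
  omega

lemma frob_mem_of_ssubset (hL : ∀ x ∈ LgapsNS S, x + x = f) {T : Set ℕ}
    (hT : IsNumericalSemigroup T) (hST : S ⊂ T) : f ∈ T := by
  obtain ⟨x, hxT, hxS⟩ := Set.exists_of_ssubset hST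
  by_cases hxL : x ∈ LgapsNS S
  · exact hL x hxL ▸ hT.2.1 x hxT x hxT
  · have hfx : f - x ∈ S := by
      by_contra hfx
      exact hxL ((mem_LgapsNS_iff hS hfF).mpr ⟨hxS, hfx⟩)
    have := le_of_notMem hS hfF hxS
    simpa [show x + (f - x) = f by omega] using hT.2.1 x hxT (f - x) (hST.1 hfx)

include hf in
lemma isIrreducibleNS_iff : IsIrreducibleNS S ↔ ∀ x ∈ LgapsNS S, x + x = f := by
  refine ⟨fun hirr => ?_, fun hL => ⟨hS, ?_⟩⟩
  · by_contra! hx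
    set A := {y ∈ LgapsNS S | y + y ≠ f}
    have hA : BddAbove A := (hS.2.2.subset fun y hy => hy.1.1).bddAbove
    obtain ⟨hh, hhf⟩ : sSup A ∈ A := Nat.sSup_mem hx hA
    set h := sSup A
    have hmax : ∀ y ∈ LgapsNS S, y + y ≠ f → y ≤ h := fun y hy hyf => le_csSup hA ⟨hy, hyf⟩
    have := le_of_notMem hS hfF hh.1
    have := hmax _ (sub_mem_LgapsNS hS hfF hh) (by omega)
    have hhf : h ≠ f := fun hhf => notMem_LgapsNS_frob hS hfF (hhf ▸ hh)
    refine hirr.2 ⟨insert h S, insert f S,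
      isNumericalSemigroup_insert_of_maximal hS hfF hh (by omega) hmax,
      isNumericalSemigroup_insert_frob hS hf hfF, Set.ssubset_insert hh.1, Set.ssubset_insert hf,
      ?_⟩
    ext y
    simp only [Set.mem_inter_iff, Set.mem_insert_iff]
    constructor
    · exact fun hy => ⟨Or.inr hy, Or.inr hy⟩
    · rintro ⟨hy | hy, hy' | hy'⟩
      all_goals first | assumption | exact absurd (hy.symm.trans hy') hhf
  · rintro ⟨T₁, T₂, hT₁, hT₂, hST₁, hST₂, hS₁₂⟩
    exact hf <| hS₁₂ ▸
      ⟨frob_mem_of_ssubset hS hfF hL hT₁ hST₁, frob_mem_of_ssubset hS hfF hL hT₂ hST₂⟩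

end Frobenius

/-- A numerical semigroup S is pseudo-symmetric if and only if l(S) = 1. -/
theorem stmt2 (S : Set ℕ) (hS : IsNumericalSemigroup S) :
    IsPseudoSymmetricNS S ↔ lNS S = 1 := by
  rcases frobNS_eq_neg_one_or_exists hS with hF | ⟨f, hf, hfF⟩
  · simp [IsPseudoSymmetricNS, lNS, hF, LgapsNS_eq_empty_of_frobNS_eq_neg_one hS hF]
  rw [IsPseudoSymmetricNS, isIrreducibleNS_iff hS hf hfF, ← hfF, Int.even_coe_nat, lNS,
    Set.ncard_eq_one]
  constructor
  · rintro ⟨hL, m, rfl⟩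
    have hm : m ∈ LgapsNS S := by
      have hmS : m ∉ S := fun hm => hf (hS.2.1 m hm m hm)
      exact (mem_LgapsNS_iff hS hfF).mpr ⟨hmS, by rwa [Nat.add_sub_cancel]⟩
    refine ⟨m, Set.Subset.antisymm (fun x hx => ?_) (Set.singleton_subset_iff.mpr hm)⟩
    have := hL x hx
    exact Set.mem_singleton_iff.mpr (by omega)
  · rintro ⟨h, hLh⟩
    have hh : h ∈ LgapsNS S := hLh ▸ rfl
    have hfh : f - h = h := by simpa [hLh] using sub_mem_LgapsNS hS hfF hh
    have := le_of_notMem hS hfF hh.1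
    exact ⟨fun x hx => by rw [hLh, Set.mem_singleton_iff] at hx; omega, h, by omega⟩
end

section
/- Let S be a numerical semigroup and let x ∈ msg(S) with x < F(S). Then S∖{x} is a numerical semigroup and l(S∖{x}) = l(S) + 2. -/
/-- If x ∈ msg(S) and x < F(S), then S∖{x} is a numerical semigroup and
l(S∖{x}) = l(S) + 2. -/
theorem stmt4 (S : Set ℕ) (hS : IsNumericalSemigroup S) (x : ℕ)
    (hx : x ∈ msgNS S) (hxF : (x : ℤ) < frobNS S) :
    IsNumericalSemigroup (S \ {x}) ∧ lNS (S \ {x}) = lNS S + 2 := by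
  obtain ⟨h0, hadd, hfin⟩ := hS
  obtain ⟨hxS, hxne, hxmsg⟩ := hx
  set T := S \ {x} with hTdef
  -- facts about frobNS S
  set A : Set ℤ := insert (-1) ((fun n : ℕ => (n : ℤ)) '' Sᶜ) with hA
  have hAfin : A.Finite := Set.Finite.insert _ (hfin.image _)
  have hAne : A.Nonempty := ⟨-1, Set.mem_insert _ _⟩
  have hFmem : frobNS S ∈ A := hAne.csSup_mem hAfin
  have hle : ∀ a ∈ A, a ≤ frobNS S := fun a ha => le_csSup hAfin.bddAbove ha
  have hFpos : (0:ℤ) ≤ frobNS S := le_trans (Int.ofNat_nonneg x) hxF.le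
  obtain ⟨Fn, hFnS, hFnc⟩ : ∃ Fn : ℕ, Fn ∉ S ∧ (Fn : ℤ) = frobNS S := by
    rcases hFmem with h | ⟨n, hn, hn2⟩
    · omega
    · exact ⟨n, hn, hn2⟩
  have hxFn : x < Fn := by
    have : (x:ℤ) < (Fn:ℤ) := by rw [hFnc]; exact hxF
    exact_mod_cast this
  -- T is a numerical semigroup
  have hT0 : (0:ℕ) ∈ T := ⟨h0, fun h => hxne (Set.mem_singleton_iff.mp h).symm⟩
  have hTadd : ∀ a ∈ T, ∀ b ∈ T, a + b ∈ T := by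
    rintro a ⟨haS, hax⟩ b ⟨hbS, hbx⟩
    refine ⟨hadd a haS b hbS, ?_⟩
    rcases Nat.eq_zero_or_pos a with ha0 | ha0
    · subst ha0; simpa using hbx
    rcases Nat.eq_zero_or_pos b with hb0 | hb0
    · subst hb0; simpa using hax
    exact hxmsg a haS b hbS (by omega) (by omega)
  have hTcsub : Tᶜ ⊆ Sᶜ ∪ {x} := by
    intro n hn
    by_cases hnS : n ∈ S
    · right
      by_contra hnx
      exact hn ⟨hnS, hnx⟩
    · exact Or.inl hnS
  have hTfin : Tᶜ.Finite := (hfin.union (Set.finite_singleton x)).subset hTcsub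
  have hTNS : IsNumericalSemigroup T := ⟨hT0, hTadd, hTfin⟩
  refine ⟨hTNS, ?_⟩
  -- frobNS T = frobNS S
  have hFnT : Fn ∉ T := fun h => hFnS h.1
  have hFT : frobNS T = frobNS S := by
    apply le_antisymm
    · show sSup (insert (-1) ((fun n : ℕ => (n : ℤ)) '' Tᶜ)) ≤ frobNS S
      apply csSup_le ⟨-1, Set.mem_insert _ _⟩
      rintro b (rfl | ⟨n, hn, rfl⟩)
      · omega
      · rcases hTcsub hn with h | h
        · exact hle _ (Set.mem_insert_of_mem _ ⟨n, h, rfl⟩)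
        · rw [Set.mem_singleton_iff.mp h]; exact hxF.le
    · rw [← hFnc]
      exact le_csSup (Set.Finite.bddAbove (Set.Finite.insert _ (hTfin.image _)))
        (Set.mem_insert_of_mem _ ⟨Fn, hFnT, rfl⟩)
  -- membership transfer for small elements
  have hxsmall : x ∈ smallNS S := ⟨hxS, hxF⟩
  have claim1 : ∀ z ∈ toZNS (smallNS T), z ∈ toZNS (smallNS S) ∧ z ≠ (x:ℤ) := by
    rintro z ⟨s, ⟨⟨hsS, hsx⟩, hsF⟩, rfl⟩
    rw [hFT] at hsF
    refine ⟨⟨s, ⟨hsS, hsF⟩, rfl⟩, ?_⟩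
    intro h
    exact hsx (Set.mem_singleton_iff.mpr (by exact_mod_cast h))
  have claim2 : ∀ z ∈ toZNS (smallNS S), z ≠ (x:ℤ) → z ∈ toZNS (smallNS T) := by
    rintro z ⟨s, ⟨hsS, hsF⟩, rfl⟩ hzx
    exact ⟨s, ⟨⟨hsS, fun h => hzx (by rw [Set.mem_singleton_iff.mp h])⟩,
      by rw [hFT]; exact hsF⟩, rfl⟩
  have hcastsub : ((Fn - x : ℕ) : ℤ) = (Fn : ℤ) - (x : ℤ) := by
    rw [Nat.cast_sub hxFn.le]
  -- the three membership facts
  have hx_mem : x ∈ LgapsNS T := by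
    refine ⟨fun h => h.2 rfl, ?_⟩
    rintro ⟨s, hsmem, hsz⟩
    have hsS : s ∈ S := hsmem.1.1
    have hsx : s + x = Fn := by
      have h1 : (s:ℤ) = frobNS S - (x:ℤ) := by rw [← hFT]; exact hsz
      have : (s:ℤ) + (x:ℤ) = (Fn:ℤ) := by rw [hFnc]; omega
      exact_mod_cast this
    exact hFnS (hsx ▸ hadd s hsS x hxS)
  have hFx_mem : Fn - x ∈ LgapsNS T := by
    have hsub : Fn - x + x = Fn := Nat.sub_add_cancel hxFn.le
    refine ⟨?_, ?_⟩
    · intro h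
      exact hFnS (hsub ▸ hadd _ h.1 x hxS)
    · rintro ⟨s, hsmem, hsz⟩
      have hsx : s = x := by
        have : (s:ℤ) = (x:ℤ) := by rw [hsz, hFT, ← hFnc, hcastsub]; ring
        exact_mod_cast this
      exact hsmem.1.2 (hsx ▸ rfl)
  have hsub_mem : LgapsNS S ⊆ LgapsNS T := by
    rintro g ⟨hgS, hgF⟩
    refine ⟨fun h => hgS h.1, ?_⟩
    intro hmem
    rw [hFT] at hmem
    exact hgF (claim1 _ hmem).1
  -- the key set identity
  have hLg : LgapsNS T = insert x (insert (Fn - x) (LgapsNS S)) := by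
    ext g
    constructor
    · rintro ⟨hgT, hgF⟩
      by_cases hgx : g = x
      · exact Or.inl hgx
      right
      by_cases hgFx : g = Fn - x
      · exact Or.inl hgFx
      right
      have hgS : g ∉ S := fun h => hgT ⟨h, fun hh => hgx (Set.mem_singleton_iff.mp hh)⟩
      refine ⟨hgS, ?_⟩
      rintro ⟨s, hsmem, hsz⟩
      by_cases hsx : s = x
      · apply hgFx
        have hgz : (g : ℤ) = ((Fn - x : ℕ) : ℤ) := by
          have hsxz : (s:ℤ) = (x:ℤ) := by exact_mod_cast hsx
          rw [hcastsub, hFnc]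
          omega
        exact_mod_cast hgz
      · apply hgF
        rw [hFT]
        exact claim2 _ ⟨s, hsmem, hsz⟩ (fun h => hsx (by exact_mod_cast hsz.trans h))
    · rintro (h | h | h)
      · rw [h]; exact hx_mem
      · rw [h]; exact hFx_mem
      · exact hsub_mem h
  -- counting
  have hLfin : (LgapsNS S).Finite := hfin.subset (fun g hg => hg.1)
  have hxnotL : x ∉ LgapsNS S := fun h => h.1 hxS
  have hFxnotL : Fn - x ∉ LgapsNS S := by
    rintro ⟨-, h2⟩
    apply h2
    refine ⟨x, hxsmall, ?_⟩
    rw [hcastsub, ← hFnc]; ring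
  have hxneFx : x ≠ Fn - x := by
    intro h
    have h2x : x + x = Fn := by omega
    exact hFnS (h2x ▸ hadd x hxS x hxS)
  have hxnotIns : x ∉ insert (Fn - x) (LgapsNS S) := by
    rintro (h | h)
    · exact hxneFx h
    · exact hxnotL h
  unfold lNS
  rw [hLg, Set.ncard_insert_of_notMem hxnotIns ((hLfin.insert _)),
    Set.ncard_insert_of_notMem hFxnotL hLfin]
end

section
/- Let S be a numerical semigroup with Frobenius number F and l(S) ≥ 2. Then the set {x ∈ ℕ∖S : F − x ∉ S and x ≠ F/2} is nonempty; and if h(S) denotes its maximum (which equals max L(S)), then S ∪ {h(S)} is a numerical semigroup with Frobenius number F and l(S ∪ {h(S)}) = l(S) − 2. -/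
lemma le_frob {S : Set ℕ} (hS : IsNumericalSemigroup S) {n : ℕ} (hn : n ∉ S) :
    (n : ℤ) ≤ frobNS S :=
  le_csSup ((hS.2.2.image _).insert _).bddAbove (Set.mem_insert_of_mem _ ⟨n, hn, rfl⟩)

lemma frob_gap {S : Set ℕ} (hS : IsNumericalSemigroup S) {g : ℕ} (hg : g ∉ S) :
    ∃ m : ℕ, m ∉ S ∧ (m : ℤ) = frobNS S := by
  have hfin : (insert (-1) ((fun n : ℕ => (n:ℤ)) '' Sᶜ)).Finite := (hS.2.2.image _).insert _
  have hne : (insert (-1) ((fun n : ℕ => (n:ℤ)) '' Sᶜ)).Nonempty := ⟨-1, Set.mem_insert _ _⟩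
  have hmem : frobNS S ∈ insert (-1) ((fun n : ℕ => (n:ℤ)) '' Sᶜ) := hne.csSup_mem hfin
  rcases hmem with h1 | ⟨m, hm, hme⟩
  · exfalso
    have hle := le_frob hS hg
    rw [h1] at hle
    omega
  · exact ⟨m, hm, hme⟩

lemma frob_eq_of {S : Set ℕ} {m : ℕ} (hS : IsNumericalSemigroup S) (hm : m ∉ S)
    (hub : ∀ n : ℕ, n ∉ S → (n : ℤ) ≤ (m : ℤ)) : frobNS S = (m : ℤ) := by
  refine le_antisymm (csSup_le ⟨-1, Set.mem_insert _ _⟩ ?_) (le_frob hS hm)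
  rintro z (rfl | ⟨n, hn, rfl⟩)
  · omega
  · exact hub n hn

lemma lgaps_eq {S : Set ℕ} (h0 : 0 ∈ S) :
    LgapsNS S = {x : ℕ | x ∉ S ∧ frobNS S - (x : ℤ) ∉ toZNS S} := by
  ext x
  simp only [LgapsNS, Set.mem_setOf_eq]
  refine and_congr_right fun hx => ?_
  constructor
  · intro h2 h3
    obtain ⟨n, hn, hne⟩ := h3
    refine h2 ⟨n, ⟨hn, ?_⟩, hne⟩
    have hx1 : x ≠ 0 := fun h => hx (h ▸ h0)
    have : (1 : ℤ) ≤ (x : ℤ) := by exact_mod_cast Nat.one_le_iff_ne_zero.mpr hx1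
    omega
  · intro h2 h3
    obtain ⟨n, ⟨hn, _⟩, hne⟩ := h3
    exact h2 ⟨n, hn, hne⟩

lemma lgaps_symm {S : Set ℕ} (hS : IsNumericalSemigroup S) {x : ℕ}
    (hx1 : x ∉ S) (hx2 : frobNS S - (x : ℤ) ∉ toZNS S) :
    ∃ y : ℕ, (y : ℤ) = frobNS S - (x : ℤ) ∧ y ∉ S ∧ frobNS S - (y : ℤ) ∉ toZNS S := by
  have hxF := le_frob hS hx1
  refine ⟨(frobNS S - (x : ℤ)).toNat, by omega, ?_, ?_⟩
  · intro hy
    exact hx2 ⟨_, hy, by omega⟩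
  · rintro ⟨n, hn, hne⟩
    have : n = x := by omega
    exact hx1 (this ▸ hn)

lemma toZ_union {S : Set ℕ} (m : ℕ) : toZNS (S ∪ {m}) = toZNS S ∪ {(m : ℤ)} := by
  ext z
  constructor
  · rintro ⟨n, (hn | rfl), rfl⟩
    exacts [Or.inl ⟨n, hn, rfl⟩, Or.inr rfl]
  · rintro (⟨n, hn, rfl⟩ | rfl)
    exacts [⟨n, Or.inl hn, rfl⟩, ⟨m, Or.inr rfl, rfl⟩]

theorem stmt5' (S : Set ℕ) (hS : IsNumericalSemigroup S) (hl : 2 ≤ lNS S) :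
    {x : ℕ | x ∉ S ∧ frobNS S - (x : ℤ) ∉ toZNS S ∧ 2 * (x : ℤ) ≠ frobNS S}.Nonempty ∧
    ∀ h : ℕ,
      h = sSup {x : ℕ | x ∉ S ∧ frobNS S - (x : ℤ) ∉ toZNS S ∧ 2 * (x : ℤ) ≠ frobNS S} →
      h = sSup (LgapsNS S) ∧
      IsNumericalSemigroup (S ∪ {h}) ∧
      frobNS (S ∪ {h}) = frobNS S ∧
      lNS (S ∪ {h}) = lNS S - 2 := by
  have h0 : 0 ∈ S := hS.1
  have hLeq : LgapsNS S = {x : ℕ | x ∉ S ∧ frobNS S - (x : ℤ) ∉ toZNS S} := lgaps_eq h0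
  have hLfin : (LgapsNS S).Finite := hS.2.2.subset (fun x hx => hx.1)
  have hLne : (LgapsNS S).Nonempty := by
    rw [Set.nonempty_iff_ne_empty]
    intro he
    rw [lNS, he, Set.ncard_empty] at hl
    omega
  set m := sSup (LgapsNS S) with hm_def
  have hmmem : m ∈ LgapsNS S := Nat.sSup_mem hLne hLfin.bddAbove
  have hmmax : ∀ x ∈ LgapsNS S, x ≤ m := fun x hx => le_csSup hLfin.bddAbove hx
  have hmS : m ∉ S := hmmem.1
  have hmF : frobNS S - (m : ℤ) ∉ toZNS S := by
    have := hLeq ▸ hmmem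
    exact this.2
  have h2 : ∃ a b, a ∈ LgapsNS S ∧ b ∈ LgapsNS S ∧ a ≠ b :=
    (Set.one_lt_ncard_iff hLfin).mp (by have := hl; rw [lNS] at this; omega)
  -- max is not F/2
  have hm2 : 2 * (m : ℤ) ≠ frobNS S := by
    intro heq
    obtain ⟨a, b, ha, hb, hab⟩ := h2
    have hx : ∃ x ∈ LgapsNS S, x ≠ m := by
      by_cases ham : a = m
      · exact ⟨b, hb, fun e => hab (by rw [ham, e])⟩
      · exact ⟨a, ha, ham⟩
    obtain ⟨x, hx, hxm⟩ := hx
    have hxlt : x < m := lt_of_le_of_ne (hmmax x hx) hxm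
    have hx' := hLeq ▸ hx
    obtain ⟨y, hy1, hy2, hy3⟩ := lgaps_symm hS hx'.1 hx'.2
    have hymem : y ∈ LgapsNS S := by rw [hLeq]; exact ⟨hy2, hy3⟩
    have hym := hmmax y hymem
    have : (x : ℤ) < m := by exact_mod_cast hxlt
    have : (y : ℤ) ≤ m := by exact_mod_cast hym
    omega
  have hmA : m ∈ {x : ℕ | x ∉ S ∧ frobNS S - (x : ℤ) ∉ toZNS S ∧ 2 * (x : ℤ) ≠ frobNS S} :=
    ⟨hmS, hmF, hm2⟩
  have hAsub : {x : ℕ | x ∉ S ∧ frobNS S - (x : ℤ) ∉ toZNS S ∧ 2 * (x : ℤ) ≠ frobNS S}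
      ⊆ LgapsNS S := by
    intro x hx
    rw [hLeq]
    exact ⟨hx.1, hx.2.1⟩
  have hsupA : sSup {x : ℕ | x ∉ S ∧ frobNS S - (x : ℤ) ∉ toZNS S ∧ 2 * (x : ℤ) ≠ frobNS S}
      = m :=
    le_antisymm (csSup_le ⟨m, hmA⟩ fun x hx => hmmax x (hAsub hx))
      (le_csSup (hLfin.subset hAsub).bddAbove hmA)
  refine ⟨⟨m, hmA⟩, ?_⟩
  rintro h rfl
  rw [hsupA]
  -- key closure properties
  have key : ∀ s ∈ S, s ≠ 0 → m + s ∈ S := by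
    intro s hs hs0
    by_contra hms
    have hmem2 : m + s ∈ LgapsNS S := by
      rw [hLeq]
      refine ⟨hms, ?_⟩
      rintro ⟨n, hn, hne⟩
      refine hmF ⟨n + s, hS.2.1 n hn s hs, ?_⟩
      push_cast at hne ⊢
      omega
    have := hmmax _ hmem2
    omega
  have key2 : m + m ∈ S := by
    by_contra h2m
    have hmm : m + m ∈ LgapsNS S := by
      rw [hLeq]
      refine ⟨h2m, ?_⟩
      rintro ⟨n, hn, hne⟩
      have hn0 : n ≠ 0 := by
        rintro rfl
        apply hm2
        push_cast at hne
        omega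
      refine hmF ⟨m + n, key n hn hn0, ?_⟩
      push_cast at hne ⊢
      omega
    have := hmmax _ hmm
    have hm0 : m ≠ 0 := fun e => hmS (e ▸ h0)
    omega
  have hT : IsNumericalSemigroup (S ∪ {m}) := by
    refine ⟨Or.inl h0, ?_, ?_⟩
    · rintro a (ha | rfl) b (hb | rfl)
      · exact Or.inl (hS.2.1 a ha b hb)
      · by_cases ha0 : a = 0
        · subst ha0; simp
        · exact Or.inl (by rw [add_comm]; exact key a ha ha0)
      · by_cases hb0 : b = 0
        · subst hb0; simp
        · exact Or.inl (key b hb hb0)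
      · exact Or.inl key2
    · refine hS.2.2.subset ?_
      intro x hx
      simp only [Set.mem_compl_iff, Set.mem_union] at hx ⊢
      exact fun h => hx (Or.inl h)
  obtain ⟨f, hfS, hfF⟩ := frob_gap hS hmS
  have hfm : f ≠ m := by
    rintro rfl
    exact hmF ⟨0, h0, by omega⟩
  have hFT : frobNS (S ∪ {m}) = frobNS S := by
    rw [← hfF]
    refine frob_eq_of hT ?_ ?_
    · rintro (h | h)
      · exact hfS h
      · exact hfm h
    · intro n hn
      rw [hfF]
      exact le_frob hS (fun h => hn (Or.inl h))
  obtain ⟨y, hy1, hy2, hy3⟩ := lgaps_symm hS hmS hmF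
  have hymem : y ∈ LgapsNS S := by rw [hLeq]; exact ⟨hy2, hy3⟩
  have hym : m ≠ y := by
    rintro rfl
    exact hm2 (by omega)
  have hLT : LgapsNS (S ∪ {m}) = LgapsNS S \ {m, y} := by
    rw [lgaps_eq (Or.inl h0 : (0:ℕ) ∈ S ∪ {m}), hFT, hLeq, toZ_union]
    ext x
    simp only [Set.mem_setOf_eq, Set.mem_diff, Set.mem_union, Set.mem_singleton_iff,
      Set.mem_insert_iff, not_or]
    constructor
    · rintro ⟨⟨hxS, hxm⟩, hxZ, hxm2⟩
      refine ⟨⟨hxS, hxZ⟩, hxm, ?_⟩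
      rintro rfl
      exact hxm2 (by omega)
    · rintro ⟨⟨hxS, hxZ⟩, hxm, hxy⟩
      refine ⟨⟨hxS, hxm⟩, hxZ, ?_⟩
      intro he
      exact hxy (by omega)
  constructor
  · rfl
  refine ⟨hT, hFT, ?_⟩
  rw [lNS, lNS, hLT, Set.ncard_diff (by rintro z (rfl | rfl); exacts [hmmem, hymem])
    (Set.toFinite _), Set.ncard_pair hym]

/-- If l(S) ≥ 2 then {x ∈ ℕ∖S : F − x ∉ S, x ≠ F/2} is nonempty; its maximum
h(S) equals max L(S), and S ∪ {h(S)} is a numerical semigroup with Frobenius number F and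
l(S ∪ {h(S)}) = l(S) − 2. -/
theorem stmt5 (S : Set ℕ) (F : ℤ) (hS : IsNumericalSemigroup S)
    (hF : frobNS S = F) (hl : 2 ≤ lNS S) :
    {x : ℕ | x ∉ S ∧ F - (x : ℤ) ∉ toZNS S ∧ 2 * (x : ℤ) ≠ F}.Nonempty ∧
    ∀ h : ℕ,
      h = sSup {x : ℕ | x ∉ S ∧ F - (x : ℤ) ∉ toZNS S ∧ 2 * (x : ℤ) ≠ F} →
      h = sSup (LgapsNS S) ∧
      IsNumericalSemigroup (S ∪ {h}) ∧
      frobNS (S ∪ {h}) = F ∧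
      lNS (S ∪ {h}) = lNS S - 2 := by
  subst hF
  exact stmt5' S hS hl
end

section
/- Let F be a positive integer, let S be a numerical semigroup with Frobenius number F, and let l ∈ ℕ. The following conditions are equivalent: (1) l(S) = l and l ≥ 2; (2) there exist a numerical semigroup T with Frobenius number F and an element x ∈ msg(T) such that l(T) = l − 2, F/2 < x < F, and S = T∖{x}. -/
lemma frobNS_eq_iff {S : Set ℕ} (hfin : Sᶜ.Finite) {F : ℕ} :
    frobNS S = F ↔ F ∉ S ∧ ∀ n ∉ S, n ≤ F := by
  set A := insert (-1) ((fun n : ℕ => (n : ℤ)) '' Sᶜ)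
  have hA : A.Finite := (hfin.image _).insert _
  have hA_max : IsGreatest A (sSup A) :=
    ⟨(Set.insert_nonempty _ _).csSup_mem hA, fun _ hz => le_csSup hA.bddAbove hz⟩
  change sSup A = F ↔ _
  constructor
  · intro hF
    rw [hF] at hA_max
    obtain ⟨hmem | ⟨n, hn, hnF⟩, hub⟩ := hA_max
    · omega
    · refine ⟨Nat.cast_inj.mp hnF ▸ hn, fun m hm => ?_⟩
      exact Nat.cast_le.mp (hub (Set.mem_insert_of_mem _ ⟨m, hm, rfl⟩))
  · rintro ⟨hF, hub⟩
    refine hA_max.unique ⟨Set.mem_insert_of_mem _ ⟨F, hF, rfl⟩, ?_⟩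
    rintro _ (rfl | ⟨n, hn, rfl⟩)
    · omega
    · exact Nat.cast_le.mpr (hub n hn)

namespace IsNumericalSemigroup

variable {S : Set ℕ} {F : ℕ} (hS : IsNumericalSemigroup S)
include hS

lemma frob_notMem (hSF : frobNS S = F) : F ∉ S := ((frobNS_eq_iff hS.2.2).mp hSF).1

lemma le_frob_of_notMem (hSF : frobNS S = F) {n : ℕ} (hn : n ∉ S) : n ≤ F :=
  ((frobNS_eq_iff hS.2.2).mp hSF).2 n hn

/- Truncated subtraction is harmless: for `x ≥ F` the right-hand side fails as
`F - x = 0 ∈ S`. -/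
lemma mem_LgapsNS_iff (hSF : frobNS S = F) {x : ℕ} :
    x ∈ LgapsNS S ↔ x ∉ S ∧ F - x ∉ S := by
  have hF := hS.frob_notMem hSF
  have hF0 : F ≠ 0 := fun h => hF (h ▸ hS.1)
  simp only [LgapsNS, toZNS, smallNS, hSF, Set.mem_ofPred_eq, not_exists, not_and]
  refine and_congr_right fun hx => ?_
  have hxF := hS.le_frob_of_notMem hSF hx
  have hx0 : x ≠ 0 := fun h => hx (h ▸ hS.1)
  constructor
  · intro h hFx
    rcases Nat.eq_or_lt_of_le hxF with rfl | hlt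
    · exact h 0 ⟨hS.1, by omega⟩ (by simp)
    · exact h (F - x) ⟨hFx, by omega⟩ (Nat.cast_sub hxF)
  · intro h n hn hnx
    exact h (by rw [show F - x = n by omega]; exact hn.1)

lemma lt_frob_of_mem_LgapsNS (hSF : frobNS S = F) {x : ℕ} (hx : x ∈ LgapsNS S) : x < F := by
  obtain ⟨hxS, hFx⟩ := (hS.mem_LgapsNS_iff hSF).mp hx
  refine lt_of_le_of_ne (hS.le_frob_of_notMem hSF hxS) ?_
  rintro rfl
  exact hFx (by simpa using hS.1)

lemma frob_sub_mem_LgapsNS (hSF : frobNS S = F) {x : ℕ} (hx : x ∈ LgapsNS S) :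
    F - x ∈ LgapsNS S := by
  obtain ⟨hxS, hFx⟩ := (hS.mem_LgapsNS_iff hSF).mp hx
  rw [hS.mem_LgapsNS_iff hSF, Nat.sub_sub_self (hS.le_frob_of_notMem hSF hxS)]
  exact ⟨hFx, hxS⟩

lemma finite_LgapsNS : (LgapsNS S).Finite := hS.2.2.subset fun _ hx => hx.1

lemma sdiff_singleton_of_mem_msgNS {x : ℕ} (hx : x ∈ msgNS S) :
    IsNumericalSemigroup (S \ {x}) := by
  obtain ⟨hxS, hx0, hx_irred⟩ := hx
  refine ⟨⟨hS.1, Ne.symm hx0⟩, ?_, Set.compl_sdiff ▸ (Set.finite_singleton x).union hS.2.2⟩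
  rintro a ⟨haS, hax⟩ b ⟨hbS, hbx⟩
  refine ⟨hS.2.1 a haS b hbS, fun hab => ?_⟩
  rcases Nat.eq_zero_or_pos a with rfl | ha0
  · exact hbx (by simpa using hab)
  rcases Nat.eq_zero_or_pos b with rfl | hb0
  · exact hax (by simpa using hab)
  exact hx_irred a haS b hbS ha0.ne' hb0.ne' hab

lemma frobNS_sdiff_singleton (hSF : frobNS S = F) {x : ℕ} (hxF : x < F) :
    frobNS (S \ {x}) = F := by
  refine (frobNS_eq_iff (Set.compl_sdiff ▸ (Set.finite_singleton x).union hS.2.2)).mpr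
    ⟨fun h => hS.frob_notMem hSF h.1, fun n hn => ?_⟩
  by_cases hnx : n = x
  · omega
  · exact hS.le_frob_of_notMem hSF fun hnS => hn ⟨hnS, hnx⟩

lemma LgapsNS_sdiff_singleton (hSF : frobNS S = F) {x : ℕ} (hx : x ∈ msgNS S) (hxF : x < F) :
    LgapsNS (S \ {x}) = insert x (insert (F - x) (LgapsNS S)) := by
  have hFx : F - x ∉ S := fun h =>
    hS.frob_notMem hSF (Nat.sub_add_cancel hxF.le ▸ hS.2.1 _ h _ hx.1)
  have hx0 : x ≠ 0 := hx.2.1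
  ext y
  simp only [Set.mem_insert_iff, hS.mem_LgapsNS_iff hSF,
    (hS.sdiff_singleton_of_mem_msgNS hx).mem_LgapsNS_iff (hS.frobNS_sdiff_singleton hSF hxF),
    Set.mem_sdiff, Set.mem_singleton_iff]
  by_cases hyx : y = x
  · subst hyx
    tauto
  by_cases hyFx : y = F - x
  · subst hyFx
    rw [Nat.sub_sub_self hxF.le]
    tauto
  have : F - y ≠ x := by omega
  tauto

lemma lNS_sdiff_singleton (hSF : frobNS S = F) {x : ℕ} (hx : x ∈ msgNS S) (hxF : x < F)
    (h2x : 2 * x ≠ F) : lNS (S \ {x}) = lNS S + 2 := by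
  have hxL : x ∉ insert (F - x) (LgapsNS S) := by
    rintro (h | h)
    · omega
    · exact h.1 hx.1
  have hFxL : F - x ∉ LgapsNS S := fun h =>
    ((hS.mem_LgapsNS_iff hSF).mp h).2 (by rw [Nat.sub_sub_self hxF.le]; exact hx.1)
  rw [lNS, hS.LgapsNS_sdiff_singleton hSF hx hxF,
    Set.ncard_insert_of_notMem hxL (hS.finite_LgapsNS.insert _),
    Set.ncard_insert_of_notMem hFxL hS.finite_LgapsNS, lNS]

lemma insert_of_add_mem {h : ℕ} (hadd : ∀ s ∈ S, s ≠ 0 → h + s ∈ S) (hdouble : h + h ∈ S) :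
    IsNumericalSemigroup (insert h S) := by
  refine ⟨Set.mem_insert_of_mem _ hS.1, ?_, hS.2.2.subset (Set.compl_subset_compl.mpr
    (Set.subset_insert _ _))⟩
  have hadd' : ∀ s ∈ S, h + s ∈ insert h S := fun s hs => by
    rcases eq_or_ne s 0 with rfl | hs0
    · exact Set.mem_insert _ _
    · exact Set.mem_insert_of_mem _ (hadd s hs hs0)
  rintro a (rfl | haS) b (rfl | hbS)
  · exact Set.mem_insert_of_mem _ hdouble
  · exact hadd' b hbS
  · exact add_comm b a ▸ hadd' a haS
  · exact Set.mem_insert_of_mem _ (hS.2.1 a haS b hbS)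

lemma mem_msgNS_insert {h : ℕ} (hhS : h ∉ S) : h ∈ msgNS (insert h S) := by
  refine ⟨Set.mem_insert _ _, fun h0 => hhS (h0 ▸ hS.1), ?_⟩
  rintro a (rfl | haS) b (rfl | hbS) ha0 hb0 hab
  all_goals first | omega | exact hhS (hab ▸ hS.2.1 a haS b hbS)

lemma frobNS_insert (hSF : frobNS S = F) {h : ℕ} (hhF : h ≠ F) : frobNS (insert h S) = F :=
  (frobNS_eq_iff (hS.2.2.subset (Set.compl_subset_compl.mpr (Set.subset_insert _ _)))).mpr
    ⟨by simpa [hhF.symm] using hS.frob_notMem hSF,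
      fun _ hn => hS.le_frob_of_notMem hSF fun hnS => hn (Set.mem_insert_of_mem _ hnS)⟩

lemma isGreatest_hNS (hl : lNS S ≠ 0) : IsGreatest (LgapsNS S) (hNS S) :=
  ⟨(Set.nonempty_of_ncard_ne_zero hl).csSup_mem hS.finite_LgapsNS,
    fun _ hx => le_csSup hS.finite_LgapsNS.bddAbove hx⟩

/- If `hNS S + s ∉ S`, maximality of `hNS S` forces `F - (hNS S + s) ∈ S`, and adding `s`
lands on `F - hNS S ∉ S`. -/
lemma hNS_add_mem (hSF : frobNS S = F) (hl : lNS S ≠ 0) {s : ℕ} (hs : s ∈ S) (hs0 : s ≠ 0) :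
    hNS S + s ∈ S := by
  obtain ⟨hhL, hmax⟩ := hS.isGreatest_hNS hl
  have hFh := ((hS.mem_LgapsNS_iff hSF).mp hhL).2
  by_contra hhs
  have hle := hS.le_frob_of_notMem hSF hhs
  have hnotL : hNS S + s ∉ LgapsNS S := fun h => by have := hmax h; omega
  rw [hS.mem_LgapsNS_iff hSF, not_and_not_right] at hnotL
  have := hS.2.1 _ (hnotL hhs) s hs
  rw [show F - (hNS S + s) + s = F - hNS S by omega] at this
  exact hFh this

lemma frob_lt_two_mul_hNS (hSF : frobNS S = F) (hl : 2 ≤ lNS S) : F < 2 * hNS S := by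
  obtain ⟨-, hmax⟩ := hS.isGreatest_hNS (by omega)
  by_contra! h2h
  -- `y` and `F - y` are both at most `hNS S ≤ F - hNS S`, so `y = hNS S`.
  have hsub : LgapsNS S ⊆ {hNS S} := fun y hy => by
    have := hmax (hS.frob_sub_mem_LgapsNS hSF hy)
    have := hmax hy
    have := hS.lt_frob_of_mem_LgapsNS hSF hy
    exact Set.mem_singleton_iff.mpr (by omega)
  have := Set.ncard_le_ncard hsub (Set.finite_singleton _)
  rw [Set.ncard_singleton] at this
  change lNS S ≤ 1 at this
  omega

end IsNumericalSemigroup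

theorem stmt6_general (F : ℕ) (S : Set ℕ) (hS : IsNumericalSemigroup S)
    (hSF : frobNS S = (F : ℤ)) (l : ℕ) :
    (lNS S = l ∧ 2 ≤ l) ↔
    ∃ T : Set ℕ, ∃ x : ℕ, IsNumericalSemigroup T ∧ frobNS T = (F : ℤ) ∧
      x ∈ msgNS T ∧ (lNS T : ℤ) = (l : ℤ) - 2 ∧
      (F : ℤ) < 2 * (x : ℤ) ∧ x < F ∧ S = T \ {x} := by
  constructor
  · rintro ⟨rfl, hl⟩
    set h := hNS S
    have hhL : h ∈ LgapsNS S := (hS.isGreatest_hNS (by omega)).1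
    have hhS : h ∉ S := hhL.1
    have hhF : h < F := hS.lt_frob_of_mem_LgapsNS hSF hhL
    have hFh : F < 2 * h := hS.frob_lt_two_mul_hNS hSF hl
    have hT : IsNumericalSemigroup (insert h S) := hS.insert_of_add_mem
      (fun _ hs hs0 => hS.hNS_add_mem hSF (by omega) hs hs0)
      (by_contra fun hhh => by have := hS.le_frob_of_notMem hSF hhh; omega)
    have hTF : frobNS (insert h S) = F := hS.frobNS_insert hSF hhF.ne
    have hmsg : h ∈ msgNS (insert h S) := hS.mem_msgNS_insert hhS
    have hST : insert h S \ {h} = S := Set.insert_sdiff_self_of_notMem hhS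
    have hlT := hT.lNS_sdiff_singleton hTF hmsg hhF (by omega)
    rw [hST] at hlT
    exact ⟨insert h S, h, hT, hTF, hmsg, by omega, by omega, hhF, hST.symm⟩
  · rintro ⟨T, x, hT, hTF, hx, hlT, h2x, hxF, rfl⟩
    have := hT.lNS_sdiff_singleton hTF hx hxF (by omega)
    omega

/-- For a numerical semigroup S with Frobenius number F > 0 and l ∈ ℕ:
l(S) = l ∧ l ≥ 2 iff there are a numerical semigroup T with Frobenius number F and
x ∈ msg(T) with l(T) = l − 2, F/2 < x < F, and S = T∖{x}. -/
theorem stmt6 (F : ℕ) (hF : 0 < F) (S : Set ℕ) (hS : IsNumericalSemigroup S)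
    (hSF : frobNS S = (F : ℤ)) (l : ℕ) :
    (lNS S = l ∧ 2 ≤ l) ↔
    ∃ T : Set ℕ, ∃ x : ℕ, IsNumericalSemigroup T ∧ frobNS T = (F : ℤ) ∧
      x ∈ msgNS T ∧ (lNS T : ℤ) = (l : ℤ) - 2 ∧
      (F : ℤ) < 2 * (x : ℤ) ∧ x < F ∧ S = T \ {x} :=
  stmt6_general F S hS hSF l
end

section
/- Let S be a numerical semigroup with l(S) = 3. Then: (1) {F(S), h(S)} ⊆ PF(S) ⊆ {F(S), h(S), F(S)/2, F(S) − h(S)}; (2) F(S)/2 ∈ PF(S) if and only if h(S) − F(S)/2 ∉ S; (3) F(S) − h(S) ∈ PF(S) if and only if 2·h(S) − F(S) ∉ S. -/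
private lemma frob_exists10 (S : Set ℕ) (hS : IsNumericalSemigroup S) (hne : Sᶜ.Nonempty) :
    ∃ f : ℕ, f ∉ S ∧ (∀ n : ℕ, n ∉ S → n ≤ f) ∧ (f : ℤ) = frobNS S := by
  set T := insert (-1) ((fun n : ℕ => (n : ℤ)) '' Sᶜ) with hT
  have hfin : T.Finite := (hS.2.2.image _).insert _
  have hne' : T.Nonempty := ⟨-1, by simp [hT]⟩
  have hmem : sSup T ∈ T := hne'.csSup_mem hfin
  have hbdd : BddAbove T := hfin.bddAbove
  obtain ⟨g, hg⟩ := hne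
  have hgle : (g : ℤ) ≤ sSup T := le_csSup hbdd (by exact Set.mem_insert_of_mem _ ⟨g, hg, rfl⟩)
  have hnonneg : (0 : ℤ) ≤ sSup T := le_trans (by positivity) hgle
  rcases hmem with h | h
  · omega
  · obtain ⟨f, hf, hfe'⟩ := h
    have hfe : (f : ℤ) = sSup T := hfe'
    refine ⟨f, hf, ?_, hfe⟩
    intro n hn
    have : (n : ℤ) ≤ sSup T := le_csSup hbdd (Set.mem_insert_of_mem _ ⟨n, hn, rfl⟩)
    rw [← hfe] at this
    exact_mod_cast this

/-- If l(S) = 3, then (1) {F(S), h(S)} ⊆ PF(S) ⊆ {F(S), h(S), F(S)/2,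
F(S) − h(S)}; (2) F(S)/2 ∈ PF(S) iff h(S) − F(S)/2 ∉ S; (3) F(S) − h(S) ∈ PF(S) iff
2·h(S) − F(S) ∉ S. -/
theorem stmt10 (S : Set ℕ) (hS : IsNumericalSemigroup S) (hl : lNS S = 3) :
    (({frobNS S, (hNS S : ℤ)} : Set ℤ) ⊆ PFNS S ∧
      PFNS S ⊆ ({frobNS S, (hNS S : ℤ), frobNS S / 2,
        frobNS S - (hNS S : ℤ)} : Set ℤ)) ∧
    (frobNS S / 2 ∈ PFNS S ↔ (hNS S : ℤ) - frobNS S / 2 ∉ toZNS S) ∧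
    (frobNS S - (hNS S : ℤ) ∈ PFNS S ↔ 2 * (hNS S : ℤ) - frobNS S ∉ toZNS S) := by
  obtain ⟨h0, hadd, hcof⟩ := hS
  have hl3 : (LgapsNS S).ncard = 3 := hl
  have hLsub : LgapsNS S ⊆ Sᶜ := fun x hx => hx.1
  have hLfin : (LgapsNS S).Finite := hcof.subset hLsub
  have hLne : (LgapsNS S).Nonempty := by
    rw [Set.nonempty_iff_ne_empty]
    intro he
    rw [he, Set.ncard_empty] at hl3
    omega
  have hScne : Sᶜ.Nonempty := hLne.mono hLsub
  obtain ⟨f, hfS, hfmax, hfeq⟩ := frob_exists10 S ⟨h0, hadd, hcof⟩ hScne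
  have hf1 : 1 ≤ f := by
    rcases Nat.eq_zero_or_pos f with hz | hp
    · exact absurd (hz ▸ h0) hfS
    · exact hp
  have htoZ : ∀ n : ℕ, ((n : ℤ) ∈ toZNS S ↔ n ∈ S) := by
    intro n
    constructor
    · rintro ⟨k, hk, hke⟩
      have hkn : k = n := by exact_mod_cast hke
      rwa [← hkn]
    · intro hn; exact ⟨n, hn, rfl⟩
  have hsmall : ∀ n : ℕ, ((n : ℤ) ∈ toZNS (smallNS S) ↔ n ∈ S ∧ n < f) := by
    intro n
    constructor
    · rintro ⟨k, ⟨hk, hklt⟩, hke⟩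
      have hkn : k = n := by exact_mod_cast hke
      rw [← hfeq] at hklt
      subst hkn
      exact ⟨hk, by exact_mod_cast hklt⟩
    · rintro ⟨hn, hnf⟩
      exact ⟨n, ⟨hn, by rw [← hfeq]; exact_mod_cast hnf⟩, rfl⟩
  have hLprop : ∀ x ∈ LgapsNS S, x ∉ S ∧ f - x ∉ S ∧ 1 ≤ x ∧ x < f := by
    rintro x ⟨hxS, hx2⟩
    rw [← hfeq] at hx2
    have hx1 : x ≠ 0 := fun hz => hxS (hz ▸ h0)
    have hxf : x ≤ f := hfmax x hxS
    have hxne : x ≠ f := by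
      intro hz
      apply hx2
      rw [hz, show (f : ℤ) - f = ((0 : ℕ) : ℤ) by omega]
      exact (hsmall 0).2 ⟨h0, hf1⟩
    refine ⟨hxS, ?_, by omega, by omega⟩
    intro hfx
    apply hx2
    rw [show (f : ℤ) - x = ((f - x : ℕ) : ℤ) by omega]
    exact (hsmall _).2 ⟨hfx, by omega⟩
  have hmemL : ∀ x : ℕ, 1 ≤ x → x ≤ f → x ∉ S → f - x ∉ S → x ∈ LgapsNS S := by
    intro x h1 h2 h3 h4
    refine ⟨h3, ?_⟩
    rw [← hfeq, show (f : ℤ) - x = ((f - x : ℕ) : ℤ) by omega]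
    intro hmem
    exact h4 ((hsmall _).1 hmem).1
  set H := hNS S with hHdef
  have hHL : H ∈ LgapsNS S := hLne.csSup_mem hLfin
  have hmax : ∀ x ∈ LgapsNS S, x ≤ H := fun x hx => le_csSup hLfin.bddAbove hx
  obtain ⟨hHS, hfHS, hH1, hHf⟩ := hLprop H hHL
  have hfHL : f - H ∈ LgapsNS S := by
    refine hmemL (f - H) (by omega) (by omega) hfHS ?_
    rw [Nat.sub_sub_self (by omega : H ≤ f)]
    exact hHS
  have hfHle : f - H ≤ H := hmax _ hfHL
  -- H ≠ f - H
  have hHne : f - H ≠ H := by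
    intro heq
    have h2H : 2 * H = f := by omega
    have hex : ∃ a ∈ LgapsNS S, a ≠ H := by
      by_contra hcon
      push_neg at hcon
      have hsub : LgapsNS S ⊆ {H} := fun x hx => hcon x hx
      have := Set.ncard_le_ncard hsub (Set.finite_singleton H)
      rw [Set.ncard_singleton] at this
      omega
    obtain ⟨a, haL, haH⟩ := hex
    obtain ⟨haS, hfaS, ha1, haf⟩ := hLprop a haL
    have hale : a ≤ H := hmax _ haL
    have hfaL : f - a ∈ LgapsNS S := by
      refine hmemL (f - a) (by omega) (by omega) hfaS ?_
      rw [Nat.sub_sub_self (by omega : a ≤ f)]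
      exact haS
    have := hmax _ hfaL
    omega
  have hfHlt : f - H < H := lt_of_le_of_ne hfHle hHne
  have hf2H : f < 2 * H := by omega
  -- third element
  have hex : ∃ m ∈ LgapsNS S, m ≠ H ∧ m ≠ f - H := by
    by_contra hcon
    push_neg at hcon
    have hsub : LgapsNS S ⊆ {H, f - H} := by
      intro x hx
      rcases eq_or_ne x H with hz | hz
      · exact Or.inl hz
      · exact Or.inr (hcon x hx hz)
    have h1 := Set.ncard_le_ncard hsub (Set.toFinite _)
    have h2 : ({H, f - H} : Set ℕ).ncard ≤ 2 := by
      refine le_trans (Set.ncard_insert_le _ _) ?_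
      rw [Set.ncard_singleton]
    omega
  obtain ⟨m, hmL, hmH, hmfH⟩ := hex
  obtain ⟨hmS, hfmS, hm1, hmf⟩ := hLprop m hmL
  have hmle : m ≤ H := hmax _ hmL
  have htriple : ({f - H, m, H} : Set ℕ) ⊆ LgapsNS S := by
    rintro x (rfl | rfl | rfl)
    · exact hfHL
    · exact hmL
    · exact hHL
  have hcard3 : ({f - H, m, H} : Set ℕ).ncard = 3 := by
    rw [Set.ncard_insert_of_notMem (by simp; omega) (Set.toFinite _),
      Set.ncard_insert_of_notMem (by simpa using hmH) (Set.toFinite _),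
      Set.ncard_singleton]
  have hLeq : LgapsNS S = ({f - H, m, H} : Set ℕ) :=
    (Set.eq_of_subset_of_ncard_le htriple (by omega) hLfin).symm
  have hfmL : f - m ∈ LgapsNS S := by
    refine hmemL (f - m) (by omega) (by omega) hfmS ?_
    rw [Nat.sub_sub_self (by omega : m ≤ f)]
    exact hmS
  have hfeven : f = 2 * m := by
    rw [hLeq] at hfmL
    simp only [Set.mem_insert_iff, Set.mem_singleton_iff] at hfmL
    rcases hfmL with hz | hz | hz
    · omega
    · omega
    · omega
  have hmltH : m < H := by omega
  have hfHm : f - H < m := by omega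
  -- key casts
  have ef2 : frobNS S / 2 = (m : ℤ) := by rw [← hfeq]; omega
  have efH : frobNS S - (H : ℤ) = ((f - H : ℕ) : ℤ) := by rw [← hfeq]; omega
  refine ⟨⟨?_, ?_⟩, ?_, ?_⟩
  · -- {F, H} ⊆ PF
    rintro x (rfl | rfl)
    · refine ⟨fun hm => hfS ((htoZ f).1 (by rwa [hfeq])), fun s hs hs0 => ?_⟩
      have hfs : f + s ∈ S := by
        by_contra hc
        have := hfmax _ hc
        omega
      rw [← hfeq, show (f : ℤ) + s = ((f + s : ℕ) : ℤ) by push_cast; ring]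
      exact (htoZ _).2 hfs
    · refine ⟨fun hm => hHS ((htoZ H).1 hm), fun s hs hs0 => ?_⟩
      rw [show (H : ℤ) + s = ((H + s : ℕ) : ℤ) by push_cast; ring]
      refine (htoZ _).2 ?_
      by_contra hc
      have hle : H + s ≤ f := hfmax _ hc
      have hgap2 : f - (H + s) ∉ S := by
        intro hq
        have hsum := hadd _ hq _ hs
        rw [show f - (H + s) + s = f - H by omega] at hsum
        exact hfHS hsum
      have hmem := hmemL (H + s) (by omega) hle hc hgap2
      have := hmax _ hmem
      omega
  · -- PF ⊆ quadruple
    rintro x ⟨hx1, hx2⟩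
    simp only [Set.mem_insert_iff, Set.mem_singleton_iff]
    rcases eq_or_ne x (frobNS S) with heq | hne
    · exact Or.inl heq
    rw [← hfeq] at hne ⊢
    have hxlef : x ≤ (f : ℤ) := by
      by_contra hgt
      push_neg at hgt
      have hx0 : (0 : ℤ) ≤ x := le_trans (by positivity) (le_of_lt hgt)
      have hxt : x.toNat ∈ S := by
        by_contra hc
        have := hfmax _ hc
        omega
      exact hx1 ⟨x.toNat, hxt, by omega⟩
    have hxltf : x < (f : ℤ) := lt_of_le_of_ne hxlef hne
    have htn : ((f : ℤ) - x).toNat ∉ S := by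
      intro hc
      have hne0 : ((f : ℤ) - x).toNat ≠ 0 := by omega
      have hfmem := hx2 _ hc hne0
      rw [show x + ((((f : ℤ) - x).toNat : ℕ) : ℤ) = (f : ℤ) by omega] at hfmem
      exact hfS ((htoZ f).1 hfmem)
    have htle : ((f : ℤ) - x).toNat ≤ f := hfmax _ htn
    have hx0 : (0 : ℤ) ≤ x := by omega
    have huS : x.toNat ∉ S := fun hc => hx1 ⟨x.toNat, hc, by omega⟩
    have hu1 : 1 ≤ x.toNat := by
      rcases Nat.eq_zero_or_pos x.toNat with hz | hp
      · exact absurd (hz ▸ h0 : x.toNat ∈ S) huS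
      · exact hp
    have hufu : f - x.toNat ∉ S := by
      rw [show f - x.toNat = ((f : ℤ) - x).toNat by omega]
      exact htn
    have huL := hmemL x.toNat hu1 (by omega) huS hufu
    rw [hLeq] at huL
    simp only [Set.mem_insert_iff, Set.mem_singleton_iff] at huL
    rcases huL with hz | hz | hz
    · exact Or.inr (Or.inr (Or.inr (by omega)))
    · exact Or.inr (Or.inr (Or.inl (by omega)))
    · exact Or.inr (Or.inl (by omega))
  · -- F/2 ∈ PF ↔ H - F/2 ∉ S
    rw [ef2, show (H : ℤ) - m = ((H - m : ℕ) : ℤ) by omega, htoZ]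
    constructor
    · rintro ⟨-, hp2⟩ hmem
      have hp := hp2 _ hmem (by omega)
      rw [show (m : ℤ) + ((H - m : ℕ) : ℤ) = (H : ℤ) by omega] at hp
      exact hHS ((htoZ H).1 hp)
    · intro hnot
      refine ⟨fun hc => hmS ((htoZ m).1 hc), fun s hs hs0 => ?_⟩
      rw [show (m : ℤ) + s = ((m + s : ℕ) : ℤ) by push_cast; ring]
      refine (htoZ _).2 ?_
      by_contra hc
      have hle : m + s ≤ f := hfmax _ hc
      have hgap2 : f - (m + s) ∉ S := by
        intro hq
        have hsum := hadd _ hq _ hs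
        rw [show f - (m + s) + s = m by omega] at hsum
        exact hmS hsum
      have hmem := hmemL (m + s) (by omega) hle hc hgap2
      rw [hLeq] at hmem
      simp only [Set.mem_insert_iff, Set.mem_singleton_iff] at hmem
      rcases hmem with hz | hz | hz
      · omega
      · omega
      · exact hnot (by rwa [show H - m = s by omega])
  · -- F - H ∈ PF ↔ 2H - F ∉ S
    rw [efH, show 2 * (H : ℤ) - frobNS S = ((2 * H - f : ℕ) : ℤ) by rw [← hfeq]; omega, htoZ]
    constructor
    · rintro ⟨-, hp2⟩ hmem
      have hp := hp2 _ hmem (by omega)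
      rw [show ((f - H : ℕ) : ℤ) + ((2 * H - f : ℕ) : ℤ) = (H : ℤ) by omega] at hp
      exact hHS ((htoZ H).1 hp)
    · intro hnot
      refine ⟨fun hc => hfHS ((htoZ _).1 hc), fun s hs hs0 => ?_⟩
      rw [show ((f - H : ℕ) : ℤ) + s = ((f - H + s : ℕ) : ℤ) by push_cast; ring]
      refine (htoZ _).2 ?_
      by_contra hc
      have hle : f - H + s ≤ f := hfmax _ hc
      have hgap2 : f - (f - H + s) ∉ S := by
        intro hq
        have hsum := hadd _ hq _ hs
        rw [show f - (f - H + s) + s = H by omega] at hsum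
        exact hHS hsum
      have hmem := hmemL (f - H + s) (by omega) hle hc hgap2
      rw [hLeq] at hmem
      simp only [Set.mem_insert_iff, Set.mem_singleton_iff] at hmem
      rcases hmem with hz | hz | hz
      · omega
      · -- s = H - m, so s + s = 2H - f ∈ S
        have hseq : s = H - m := by omega
        have hsum := hadd _ hs _ hs
        rw [show s + s = 2 * H - f by omega] at hsum
        exact hnot hsum
      · exact hnot (by rwa [show 2 * H - f = s by omega])
end

section
/- Let S be a numerical semigroup with l(S) = 3. Then t(S) ∈ {2, 3, 4}. Moreover: (a) t(S) = 2 if and only if h(S) − F(S)/2 ∈ S, if and only if PF(S) = {F(S), h(S)}; (b) t(S) = 3 if and only if h(S) − F(S)/2 ∉ S and 2·h(S) − F(S) ∈ S, if and only if PF(S) = {F(S), h(S), F(S)/2}; (c) t(S) = 4 if and only if 2·h(S) − F(S) ∉ S, if and only if PF(S) = {F(S), h(S), F(S)/2, F(S) − h(S)}. -/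
lemma toZNS_mem {S : Set ℕ} {n : ℕ} : (n:ℤ) ∈ toZNS S ↔ n ∈ S := by
  constructor
  · rintro ⟨m, hm, hmn⟩
    rwa [show m = n from by exact_mod_cast hmn] at hm
  · exact fun h => ⟨n, h, rfl⟩

lemma frob_spec {S : Set ℕ} (hfin : Sᶜ.Finite) (hne : Sᶜ.Nonempty) :
    ∃ F : ℕ, frobNS S = (F:ℤ) ∧ F ∉ S ∧ ∀ n : ℕ, n ∉ S → n ≤ F := by
  have hbdd : BddAbove Sᶜ := hfin.bddAbove
  have hFmem : sSup Sᶜ ∈ Sᶜ := Nat.sSup_mem hne hbdd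
  refine ⟨sSup Sᶜ, ?_, hFmem, fun n hn => le_csSup hbdd hn⟩
  rw [frobNS]
  apply IsGreatest.csSup_eq
  constructor
  · exact Set.mem_insert_of_mem _ ⟨sSup Sᶜ, hFmem, rfl⟩
  · rintro z (rfl | ⟨n, hn, rfl⟩)
    · omega
    · simp only []
      exact_mod_cast le_csSup hbdd hn

set_option maxHeartbeats 2000000 in
/-- If l(S) = 3 then t(S) ∈ {2,3,4}; moreover the stated characterizations
of t(S) = 2, 3, 4 hold. -/
theorem stmt11 (S : Set ℕ) (hS : IsNumericalSemigroup S) (hl : lNS S = 3) :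
    typeNS S ∈ ({2, 3, 4} : Set ℕ) ∧
    ((typeNS S = 2 ↔ (hNS S : ℤ) - frobNS S / 2 ∈ toZNS S) ∧
      (typeNS S = 2 ↔ PFNS S = {frobNS S, (hNS S : ℤ)})) ∧
    ((typeNS S = 3 ↔
        ((hNS S : ℤ) - frobNS S / 2 ∉ toZNS S ∧
          2 * (hNS S : ℤ) - frobNS S ∈ toZNS S)) ∧
      (typeNS S = 3 ↔ PFNS S = {frobNS S, (hNS S : ℤ), frobNS S / 2})) ∧
    ((typeNS S = 4 ↔ 2 * (hNS S : ℤ) - frobNS S ∉ toZNS S) ∧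
      (typeNS S = 4 ↔
        PFNS S = {frobNS S, (hNS S : ℤ), frobNS S / 2,
          frobNS S - (hNS S : ℤ)})) := by
  obtain ⟨h0, hadd, hfin⟩ := hS
  have hLsub : LgapsNS S ⊆ Sᶜ := fun x hx => hx.1
  have hne : Sᶜ.Nonempty := by
    rcases Set.eq_empty_or_nonempty Sᶜ with h | h
    · exfalso
      have : LgapsNS S = ∅ := Set.subset_eq_empty hLsub h
      rw [lNS, this, Set.ncard_empty] at hl
      omega
    · exact h
  obtain ⟨F, hF, hFS, hFmax⟩ := frob_spec hfin hne
  have hbig : ∀ n : ℕ, F < n → n ∈ S := by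
    intro n h
    by_contra hn
    exact absurd (hFmax n hn) (by omega)
  have Lmem : ∀ x : ℕ, x ∈ LgapsNS S ↔ (x ∉ S ∧ F - x ∉ S) := by
    intro x
    simp only [LgapsNS, Set.mem_setOf_eq]
    constructor
    · rintro ⟨hx, hx2⟩
      refine ⟨hx, fun hmem => hx2 ?_⟩
      have hxF : x ≤ F := hFmax x hx
      have hx0 : x ≠ 0 := fun h => hx (h ▸ h0)
      refine ⟨F - x, ⟨hmem, ?_⟩, ?_⟩
      · rw [hF]; omega
      · rw [hF]; omega
    · rintro ⟨hx, hx2⟩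
      refine ⟨hx, ?_⟩
      rintro ⟨m, ⟨hm, hmlt⟩, hmeq⟩
      rw [hF] at hmeq
      have hxF : x ≤ F := hFmax x hx
      have : m = F - x := by omega
      exact hx2 (this ▸ hm)
  have hLfin : (LgapsNS S).Finite := hfin.subset hLsub
  have hmemL : ∀ x ∈ LgapsNS S, x ∉ S ∧ F - x ∉ S ∧ 1 ≤ x ∧ x < F := by
    intro x hx
    rw [Lmem] at hx
    obtain ⟨h1, h2⟩ := hx
    have hx0 : x ≠ 0 := fun h => h1 (h ▸ h0)
    have hxF : x ≤ F := hFmax x h1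
    have hFx0 : F - x ≠ 0 := fun h => h2 (h ▸ h0)
    exact ⟨h1, h2, by omega, by omega⟩
  obtain ⟨a, b, c, hab, hac, hbc, hLabc⟩ := Set.ncard_eq_three.mp hl
  have ha : a ∈ LgapsNS S := by rw [hLabc]; simp
  have hb : b ∈ LgapsNS S := by rw [hLabc]; simp
  have hc : c ∈ LgapsNS S := by rw [hLabc]; simp
  have fa := hmemL a ha
  have fb := hmemL b hb
  have fc := hmemL c hc
  have hsigma : ∀ x ∈ LgapsNS S, F - x ∈ LgapsNS S := by
    intro x hx
    obtain ⟨h1, h2, h3, h4⟩ := hmemL x hx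
    rw [Lmem]
    refine ⟨h2, ?_⟩
    rwa [show F - (F - x) = x by omega]
  have sa : F - a = a ∨ F - a = b ∨ F - a = c := by
    have := hsigma a ha; rw [hLabc] at this; simpa using this
  have sb : F - b = a ∨ F - b = b ∨ F - b = c := by
    have := hsigma b hb; rw [hLabc] at this; simpa using this
  have sc : F - c = a ∨ F - c = b ∨ F - c = c := by
    have := hsigma c hc; rw [hLabc] at this; simpa using this
  have arith : (2*a = F ∧ b + c = F) ∨ (2*b = F ∧ a + c = F) ∨
      (2*c = F ∧ a + b = F) := by omega
  have key : ∃ k H : ℕ, F = 2*k ∧ k < H ∧ H < F ∧ LgapsNS S = {F - H, k, H} := by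
    rcases arith with ⟨h1, h2⟩ | ⟨h1, h2⟩ | ⟨h1, h2⟩
    · rcases (show b < c ∨ c < b by omega) with hlt | hlt
      · refine ⟨a, c, by omega, by omega, by omega, ?_⟩
        ext x; rw [hLabc]; simp only [Set.mem_insert_iff, Set.mem_singleton_iff]; omega
      · refine ⟨a, b, by omega, by omega, by omega, ?_⟩
        ext x; rw [hLabc]; simp only [Set.mem_insert_iff, Set.mem_singleton_iff]; omega
    · rcases (show a < c ∨ c < a by omega) with hlt | hlt
      · refine ⟨b, c, by omega, by omega, by omega, ?_⟩
        ext x; rw [hLabc]; simp only [Set.mem_insert_iff, Set.mem_singleton_iff]; omega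
      · refine ⟨b, a, by omega, by omega, by omega, ?_⟩
        ext x; rw [hLabc]; simp only [Set.mem_insert_iff, Set.mem_singleton_iff]; omega
    · rcases (show a < b ∨ b < a by omega) with hlt | hlt
      · refine ⟨c, b, by omega, by omega, by omega, ?_⟩
        ext x; rw [hLabc]; simp only [Set.mem_insert_iff, Set.mem_singleton_iff]; omega
      · refine ⟨c, a, by omega, by omega, by omega, ?_⟩
        ext x; rw [hLabc]; simp only [Set.mem_insert_iff, Set.mem_singleton_iff]; omega
  obtain ⟨k, H, hF2, hkH, hHF, hLset⟩ := key
  clear arith sa sb sc fa fb fc ha hb hc hLabc hab hac hbc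
  have hHmem : H ∈ LgapsNS S := by rw [hLset]; simp
  have hkmem : k ∈ LgapsNS S := by rw [hLset]; simp
  have hFHmem : F - H ∈ LgapsNS S := by rw [hLset]; simp
  obtain ⟨HnS, FHnS', -, -⟩ := hmemL H hHmem
  obtain ⟨knS, -, hk1, -⟩ := hmemL k hkmem
  obtain ⟨FHnS, -, hFH1, -⟩ := hmemL (F - H) hFHmem
  have hH : hNS S = H := by
    rw [hNS]
    apply le_antisymm
    · apply csSup_le ⟨H, hHmem⟩
      intro x hx
      rw [hLset] at hx
      simp only [Set.mem_insert_iff, Set.mem_singleton_iff] at hx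
      omega
    · exact le_csSup hLfin.bddAbove hHmem
  -- membership step lemma
  have gapstep : ∀ x s : ℕ, F - x ∉ S → s ∈ S → x + s ∉ S →
      (x + s = F - H ∨ x + s = k ∨ x + s = H) := by
    intro x s hFx hs hxs
    have h1 : x + s ≤ F := hFmax _ hxs
    have hmem : x + s ∈ LgapsNS S := by
      rw [Lmem]
      refine ⟨hxs, fun hcon => ?_⟩
      have := hadd _ hcon _ hs
      rw [show F - (x + s) + s = F - x by omega] at this
      exact hFx this
    rw [hLset] at hmem
    simpa using hmem
  have hFPF : (F:ℤ) ∈ PFNS S := by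
    refine ⟨toZNS_mem.not.mpr hFS, fun s hs hs0 => ?_⟩
    have : F + s ∈ S := hbig _ (by omega)
    exact ⟨F + s, this, by push_cast; ring⟩
  have hHPF : (H:ℤ) ∈ PFNS S := by
    refine ⟨toZNS_mem.not.mpr HnS, fun s hs hs0 => ?_⟩
    by_contra hcon
    have hcon' : H + s ∉ S := fun h => hcon ⟨H + s, h, by push_cast; ring⟩
    have := gapstep H s FHnS' hs hcon'
    omega
  have hkPF : (k:ℤ) ∈ PFNS S ↔ H - k ∉ S := by
    constructor
    · intro hpf hHk
      have := hpf.2 (H - k) hHk (by omega)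
      rw [show (k:ℤ) + ((H-k:ℕ):ℤ) = ((H:ℕ):ℤ) by omega] at this
      exact HnS (toZNS_mem.mp this)
    · intro hHk
      refine ⟨toZNS_mem.not.mpr knS, fun s hs hs0 => ?_⟩
      by_contra hcon
      have hcon' : k + s ∉ S := fun h => hcon ⟨k + s, h, by push_cast; ring⟩
      have hFk : F - k ∉ S := by rwa [show F - k = k by omega]
      have := gapstep k s hFk hs hcon'
      have : s = H - k := by omega
      exact hHk (this ▸ hs)
  have hFHPF : ((F - H:ℕ):ℤ) ∈ PFNS S ↔ 2*H - F ∉ S := by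
    constructor
    · intro hpf h2
      have := hpf.2 (2*H - F) h2 (by omega)
      rw [show ((F-H:ℕ):ℤ) + ((2*H-F:ℕ):ℤ) = ((H:ℕ):ℤ) by omega] at this
      exact HnS (toZNS_mem.mp this)
    · intro h2
      refine ⟨toZNS_mem.not.mpr FHnS, fun s hs hs0 => ?_⟩
      by_contra hcon
      have hcon' : (F - H) + s ∉ S := fun h => hcon ⟨(F-H) + s, h, by push_cast; omega⟩
      have hFFH : F - (F - H) ∉ S := by rwa [show F - (F - H) = H by omega]
      have := gapstep (F - H) s hFFH hs hcon'
      rcases this with h | h | h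
      · omega
      · -- s = k - (F - H) = H - k, then 2H - F = s + s ∈ S
        have hs' : s = H - k := by omega
        have := hadd s hs s hs
        rw [show s + s = 2*H - F by omega] at this
        exact h2 this
      · have hs' : s = 2*H - F := by omega
        exact h2 (hs' ▸ hs)
  have hPFsub : ∀ x ∈ PFNS S,
      x = (F:ℤ) ∨ x = (H:ℤ) ∨ x = (k:ℤ) ∨ x = ((F-H:ℕ):ℤ) := by
    intro x hx
    have hx0 : 0 ≤ x := by
      by_contra hneg
      push_neg at hneg
      have hsF : F < ((F:ℤ) - x).toNat := by omega
      have hsS := hbig _ hsF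
      have := hx.2 _ hsS (by omega)
      rw [show x + ((((F:ℤ) - x).toNat : ℕ):ℤ) = ((F:ℕ):ℤ) by omega] at this
      exact hFS (toZNS_mem.mp this)
    obtain ⟨x₀, rfl⟩ := Int.eq_ofNat_of_zero_le hx0
    have hx₀S : x₀ ∉ S := fun h => hx.1 (toZNS_mem.mpr h)
    have hle : x₀ ≤ F := hFmax _ hx₀S
    rcases eq_or_lt_of_le hle with heq | hlt
    · left; exact_mod_cast heq
    · have hFx : F - x₀ ∉ S := by
        intro hcon
        have := hx.2 (F - x₀) hcon (by omega)
        rw [show ((x₀:ℕ):ℤ) + ((F - x₀:ℕ):ℤ) = ((F:ℕ):ℤ) by omega] at this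
        exact hFS (toZNS_mem.mp this)
      have : x₀ ∈ LgapsNS S := (Lmem x₀).mpr ⟨hx₀S, hFx⟩
      rw [hLset] at this
      simp only [Set.mem_insert_iff, Set.mem_singleton_iff] at this
      rcases this with h | h | h
      · right; right; right; exact_mod_cast h
      · right; right; left; exact_mod_cast h
      · right; left; exact_mod_cast h
  -- rewrite the goal in terms of F, H, k
  have hdiv : frobNS S / 2 = (k:ℤ) := by rw [hF]; omega
  have e1 : ((hNS S : ℕ):ℤ) - frobNS S / 2 = ((H - k:ℕ):ℤ) := by
    rw [hdiv, hH]; omega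
  have e2 : 2 * ((hNS S : ℕ):ℤ) - frobNS S = ((2*H - F:ℕ):ℤ) := by
    rw [hF, hH]; omega
  have e3 : frobNS S - ((hNS S : ℕ):ℤ) = ((F - H:ℕ):ℤ) := by
    rw [hF, hH]; omega
  rw [e1, e2, e3, hdiv, hF, hH, toZNS_mem, toZNS_mem]
  have himp : H - k ∈ S → 2*H - F ∈ S := by
    intro h1
    have := hadd _ h1 _ h1
    rwa [show H - k + (H - k) = 2*H - F by omega] at this
  by_cases c2 : 2*H - F ∈ S
  · by_cases c1 : H - k ∈ S
    · -- type 2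
      have hPF : PFNS S = {(F:ℤ), (H:ℤ)} := by
        apply Set.Subset.antisymm
        · intro x hx
          rcases hPFsub x hx with rfl | rfl | rfl | rfl
          · exact Set.mem_insert _ _
          · exact Set.mem_insert_of_mem _ rfl
          · exact absurd c1 (hkPF.mp hx)
          · exact absurd c2 (hFHPF.mp hx)
        · rintro x (rfl | rfl)
          · exact hFPF
          · exact hHPF
      have ht : typeNS S = 2 := by
        rw [typeNS, hPF, Set.ncard_pair (by omega)]
      refine ⟨by rw [ht]; simp, ⟨?_, ?_⟩, ⟨?_, ?_⟩, ⟨?_, ?_⟩⟩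
      · exact iff_of_true ht c1
      · exact iff_of_true ht hPF
      · exact iff_of_false (by omega) (fun h => h.1 c1)
      · refine iff_of_false (by omega) (fun hE => ?_)
        have : (k:ℤ) ∈ PFNS S := by
          rw [hE]; simp
        exact (hkPF.mp this) c1
      · exact iff_of_false (by omega) (fun h => h c2)
      · refine iff_of_false (by omega) (fun hE => ?_)
        have : ((F-H:ℕ):ℤ) ∈ PFNS S := by
          rw [hE]; simp
        exact (hFHPF.mp this) c2
    · -- type 3
      have hkPF' : (k:ℤ) ∈ PFNS S := hkPF.mpr c1
      have hPF : PFNS S = {(F:ℤ), (H:ℤ), (k:ℤ)} := by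
        apply Set.Subset.antisymm
        · intro x hx
          rcases hPFsub x hx with rfl | rfl | rfl | rfl
          · exact Set.mem_insert _ _
          · exact Set.mem_insert_of_mem _ (Set.mem_insert _ _)
          · exact Set.mem_insert_of_mem _ (Set.mem_insert_of_mem _ rfl)
          · exact absurd c2 (hFHPF.mp hx)
        · rintro x (rfl | rfl | rfl)
          · exact hFPF
          · exact hHPF
          · exact hkPF'
      have ht : typeNS S = 3 := by
        rw [typeNS, hPF]
        rw [Set.ncard_insert_of_notMem (by simp; omega) (Set.toFinite _),
          Set.ncard_pair (by omega)]
      refine ⟨by rw [ht]; simp, ⟨?_, ?_⟩, ⟨?_, ?_⟩, ⟨?_, ?_⟩⟩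
      · exact iff_of_false (by omega) (fun h => c1 h)
      · refine iff_of_false (by omega) (fun hE => ?_)
        have : (k:ℤ) ∈ ({(F:ℤ), (H:ℤ)} : Set ℤ) := by rw [← hE]; exact hkPF'
        simp only [Set.mem_insert_iff, Set.mem_singleton_iff] at this
        omega
      · exact iff_of_true ht ⟨c1, c2⟩
      · exact iff_of_true ht hPF
      · exact iff_of_false (by omega) (fun h => h c2)
      · refine iff_of_false (by omega) (fun hE => ?_)
        have : ((F-H:ℕ):ℤ) ∈ PFNS S := by rw [hE]; simp
        exact (hFHPF.mp this) c2
  · -- type 4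
    have c1 : H - k ∉ S := fun h => c2 (himp h)
    have hkPF' : (k:ℤ) ∈ PFNS S := hkPF.mpr c1
    have hFHPF' : ((F-H:ℕ):ℤ) ∈ PFNS S := hFHPF.mpr c2
    have hPF : PFNS S = {(F:ℤ), (H:ℤ), (k:ℤ), ((F-H:ℕ):ℤ)} := by
      apply Set.Subset.antisymm
      · intro x hx
        rcases hPFsub x hx with rfl | rfl | rfl | rfl
        · exact Set.mem_insert _ _
        · exact Set.mem_insert_of_mem _ (Set.mem_insert _ _)
        · exact Set.mem_insert_of_mem _ (Set.mem_insert_of_mem _ (Set.mem_insert _ _))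
        · exact Set.mem_insert_of_mem _ (Set.mem_insert_of_mem _
            (Set.mem_insert_of_mem _ rfl))
      · rintro x (rfl | rfl | rfl | rfl)
        · exact hFPF
        · exact hHPF
        · exact hkPF'
        · exact hFHPF'
    have hFHk : F - H < k := by omega
    have ht : typeNS S = 4 := by
      rw [typeNS, hPF]
      rw [Set.ncard_insert_of_notMem (by simp; omega) (Set.toFinite _),
        Set.ncard_insert_of_notMem (by simp; omega) (Set.toFinite _),
        Set.ncard_pair (by omega)]
    refine ⟨by rw [ht]; simp, ⟨?_, ?_⟩, ⟨?_, ?_⟩, ⟨?_, ?_⟩⟩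
    · exact iff_of_false (by omega) (fun h => c1 h)
    · refine iff_of_false (by omega) (fun hE => ?_)
      have : ((F-H:ℕ):ℤ) ∈ ({(F:ℤ), (H:ℤ)} : Set ℤ) := by rw [← hE]; exact hFHPF'
      simp only [Set.mem_insert_iff, Set.mem_singleton_iff] at this
      omega
    · exact iff_of_false (by omega) (fun h => c2 h.2)
    · refine iff_of_false (by omega) (fun hE => ?_)
      have : ((F-H:ℕ):ℤ) ∈ ({(F:ℤ), (H:ℤ), (k:ℤ)} : Set ℤ) := by
        rw [← hE]; exact hFHPF'
      simp only [Set.mem_insert_iff, Set.mem_singleton_iff] at this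
      omega
    · exact iff_of_true ht c2
    · exact iff_of_true ht hPF
end

section
/- Let n ∈ ℕ. (1) If S is a symmetric numerical semigroup and A ⊆ {x ∈ S : F(S)/2 < x < F(S)} is a set of cardinality n such that S∖A is a numerical semigroup, then l(S∖A) = 2n. (2) Conversely, for every numerical semigroup T with l(T) = 2n there exist a symmetric numerical semigroup S with F(S) = F(T) and a set A ⊆ {x ∈ S : F(S)/2 < x < F(S)} of cardinality n such that T = S∖A. -/
private lemma finsert {S : Set ℕ} (hS : IsNumericalSemigroup S) :
    (insert (-1 : ℤ) ((fun n : ℕ => (n : ℤ)) '' Sᶜ)).Finite :=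
  ((hS.2.2).image _).insert _

private lemma gap_le_frob {S : Set ℕ} (hS : IsNumericalSemigroup S) {x : ℕ} (hx : x ∉ S) :
    (x : ℤ) ≤ frobNS S :=
  le_csSup (finsert hS).bddAbove (Set.mem_insert_iff.mpr (Or.inr ⟨x, hx, rfl⟩))

private lemma mem_of_frob_lt {S : Set ℕ} (hS : IsNumericalSemigroup S) {x : ℕ}
    (h : frobNS S < (x : ℤ)) : x ∈ S := by
  by_contra hx
  exact absurd (gap_le_frob hS hx) (not_le.mpr h)

private lemma frob_eq {S : Set ℕ} (hS : IsNumericalSemigroup S) {g : ℕ} (hg : g ∉ S)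
    (hbd : ∀ x : ℕ, x ∉ S → x ≤ g) : frobNS S = (g : ℤ) := by
  refine le_antisymm (csSup_le ⟨-1, Set.mem_insert _ _⟩ ?_) (gap_le_frob hS hg)
  rintro b hb
  rcases Set.mem_insert_iff.mp hb with rfl | ⟨x, hx, rfl⟩
  · omega
  · show (x : ℤ) ≤ (g : ℤ); exact_mod_cast hbd x hx

private lemma frob_spec_s12 {S : Set ℕ} (hS : IsNumericalSemigroup S) :
    S = Set.univ ∨ ∃ g : ℕ, g ∉ S ∧ (g : ℤ) = frobNS S := by
  have hmem : frobNS S ∈ insert (-1 : ℤ) ((fun n : ℕ => (n : ℤ)) '' Sᶜ) :=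
    Set.Nonempty.csSup_mem ⟨-1, Set.mem_insert _ _⟩ (finsert hS)
  rcases Set.mem_insert_iff.mp hmem with h | ⟨g, hg, hgeq⟩
  · left
    ext x
    simp only [Set.mem_univ, iff_true]
    by_contra hx
    have h2 := gap_le_frob hS hx
    rw [h] at h2
    omega
  · exact Or.inr ⟨g, hg, hgeq⟩

private lemma frob_univ : frobNS (Set.univ : Set ℕ) = -1 := by
  rw [frobNS]
  simp

def SymP (S : Set ℕ) : Prop :=
  ∀ x : ℕ, x ∉ S → ∃ y ∈ S, (y : ℤ) = frobNS S - (x : ℤ)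

private lemma irreducible_of_symP {S : Set ℕ} (hS : IsNumericalSemigroup S) (hsym : SymP S) :
    IsIrreducibleNS S := by
  refine ⟨hS, ?_⟩
  rintro ⟨T₁, T₂, hT₁, hT₂, hsub1, hsub2, heq⟩
  rcases frob_spec_s12 hS with huniv | ⟨g, hg, hgF⟩
  · exact hsub1.2 (by rw [huniv]; exact Set.subset_univ T₁)
  · have key : ∀ T : Set ℕ, IsNumericalSemigroup T → S ⊂ T → g ∈ T := by
      intro T hT hsub
      obtain ⟨x, hxT, hxS⟩ := Set.exists_of_ssubset hsub
      obtain ⟨y, hyS, hy⟩ := hsym x hxS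
      have hxy : x + y ∈ T := hT.2.1 x hxT y (hsub.1 hyS)
      have h1 : ((x + y : ℕ) : ℤ) = (g : ℤ) := by push_cast; omega
      have h2 : x + y = g := by exact_mod_cast h1
      rwa [h2] at hxy
    exact hg (heq ▸ ⟨key T₁ hT₁ hsub1, key T₂ hT₂ hsub2⟩)

private lemma symP_of_irreducible {S : Set ℕ} (hirr : IsIrreducibleNS S)
    (hodd : Odd (frobNS S)) : SymP S := by
  obtain ⟨hS, hnot⟩ := hirr
  by_contra hsym
  rw [SymP] at hsym
  push_neg at hsym
  obtain ⟨x₀, hx₀, hbad₀⟩ := hsym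
  rcases frob_spec_s12 hS with huniv | ⟨g, hg, hgF⟩
  · exact hx₀ (by rw [huniv]; trivial)
  have h0S : (0 : ℕ) ∈ S := hS.1
  have hg1 : 1 ≤ g := Nat.pos_of_ne_zero (fun hz => hg (hz ▸ h0S))
  obtain ⟨k, hk⟩ := hodd
  rw [← hgF] at hk
  set B : Set ℕ := {x : ℕ | x ∉ S ∧ ∀ y ∈ S, (y : ℤ) ≠ frobNS S - (x : ℤ)} with hBdef
  have hBsub : B ⊆ Sᶜ := fun x hx => hx.1
  have hBfin : B.Finite := hS.2.2.subset hBsub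
  have hBne : B.Nonempty := ⟨x₀, hx₀, hbad₀⟩
  set h : ℕ := sSup B with hhdef
  have hhB : h ∈ B := Set.Nonempty.csSup_mem hBne hBfin
  have hmax : ∀ x ∈ B, x ≤ h := fun x hx => le_csSup hBfin.bddAbove hx
  -- basic bounds on h
  have hhS : h ∉ S := hhB.1
  have hhg : (h : ℤ) ≤ (g : ℤ) := hgF ▸ gap_le_frob hS hhS
  have hhle : h ≤ g := by exact_mod_cast hhg
  have hhne : h ≠ g := by
    intro hEq
    exact hhB.2 0 h0S (by rw [← hgF, hEq]; push_cast; ring)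
  have hhlt : h < g := lt_of_le_of_ne hhle hhne
  -- g - h ∈ B
  have hghB : g - h ∈ B := by
    constructor
    · intro hmem
      exact hhB.2 (g - h) hmem (by rw [← hgF]; push_cast; omega)
    · intro y hy hyeq
      rw [← hgF] at hyeq
      have : (y : ℤ) = (h : ℤ) := by push_cast at hyeq ⊢; omega
      have : y = h := by exact_mod_cast this
      exact hhS (this ▸ hy)
  have hgh_le : g - h ≤ h := hmax _ hghB
  have h2h : g < 2 * h := by
    have : 2 * h ≠ g := by intro hEq; omega
    omega
  -- the two supersets
  refine hnot ⟨insert h S, insert g S, ?_, ?_, Set.ssubset_insert hhS, Set.ssubset_insert hg, ?_⟩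
  · -- insert h S is a numerical semigroup
    refine ⟨Set.mem_insert_of_mem _ h0S, ?_, hS.2.2.subset (by
      intro x hx
      simp only [Set.mem_compl_iff, Set.mem_insert_iff, not_or] at hx ⊢
      exact hx.2)⟩
    have hclos : ∀ s ∈ S, h + s ∈ insert h S := by
      intro s hs
      rcases Nat.eq_zero_or_pos s with rfl | hspos
      · exact Set.mem_insert _ _
      by_cases hmem : h + s ∈ S
      · exact Set.mem_insert_of_mem _ hmem
      have hhsB : h + s ∈ B := by
        refine ⟨hmem, ?_⟩
        intro y hy hyeq
        refine hhB.2 (y + s) (hS.2.1 y hy s hs) ?_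
        push_cast at hyeq ⊢
        omega
      have := hmax _ hhsB
      omega
    rintro a ha b hb
    rcases Set.mem_insert_iff.mp ha with rfl | haS <;>
      rcases Set.mem_insert_iff.mp hb with rfl | hbS
    · refine Set.mem_insert_of_mem _ (mem_of_frob_lt hS ?_)
      rw [← hgF]; push_cast; omega
    · exact hclos b hbS
    · rw [Nat.add_comm]; exact hclos a haS
    · exact Set.mem_insert_of_mem _ (hS.2.1 a haS b hbS)
  · -- insert g S is a numerical semigroup
    refine ⟨Set.mem_insert_of_mem _ h0S, ?_, hS.2.2.subset (by
      intro x hx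
      simp only [Set.mem_compl_iff, Set.mem_insert_iff, not_or] at hx ⊢
      exact hx.2)⟩
    have hclos : ∀ s ∈ S, g + s ∈ insert g S := by
      intro s hs
      rcases Nat.eq_zero_or_pos s with rfl | hspos
      · exact Set.mem_insert _ _
      refine Set.mem_insert_of_mem _ (mem_of_frob_lt hS ?_)
      rw [← hgF]; push_cast; omega
    rintro a ha b hb
    rcases Set.mem_insert_iff.mp ha with rfl | haS <;>
      rcases Set.mem_insert_iff.mp hb with rfl | hbS
    · refine Set.mem_insert_of_mem _ (mem_of_frob_lt hS ?_)
      rw [← hgF]; push_cast; omega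
    · exact hclos b hbS
    · rw [Nat.add_comm]; exact hclos a haS
    · exact Set.mem_insert_of_mem _ (hS.2.1 a haS b hbS)
  · -- S = T₁ ∩ T₂
    ext x
    simp only [Set.mem_inter_iff, Set.mem_insert_iff]
    constructor
    · intro hx; exact ⟨Or.inr hx, Or.inr hx⟩
    · rintro ⟨rfl | hx, h2⟩
      · rcases h2 with rfl | hx
        · omega
        · exact hx
      · exact hx

private lemma part1 {S A : Set ℕ} {n : ℕ} (hsymS : IsSymmetricNS S)
    (hA : A ⊆ {x ∈ S | frobNS S < 2 * (x : ℤ) ∧ (x : ℤ) < frobNS S})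
    (hcard : A.ncard = n) (hT : IsNumericalSemigroup (S \ A)) :
    lNS (S \ A) = 2 * n := by
  have hS : IsNumericalSemigroup S := hsymS.1.1
  have hsym : SymP S := symP_of_irreducible hsymS.1 hsymS.2
  have h0S : (0 : ℕ) ∈ S := hS.1
  rcases frob_spec_s12 hS with huniv | ⟨g, hg, hgF⟩
  · -- S = univ : A must be empty
    subst huniv
    have hAe : A = ∅ := by
      rw [Set.eq_empty_iff_forall_notMem]
      intro x hx
      have := (hA hx).2
      rw [frob_univ] at this
      omega
    subst hAe
    have hTe : (Set.univ : Set ℕ) \ ∅ = Set.univ := by simp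
    have hL : LgapsNS (Set.univ : Set ℕ) = ∅ := by
      rw [Set.eq_empty_iff_forall_notMem]
      intro x hx
      exact hx.1 trivial
    rw [hTe, lNS, hL, Set.ncard_empty]
    rw [Set.ncard_empty] at hcard
    omega
  -- main case
  have hg1 : 1 ≤ g := Nat.pos_of_ne_zero (fun hz => hg (hz ▸ h0S))
  set T : Set ℕ := S \ A with hTdef
  have hAprop : ∀ a ∈ A, a ∈ S ∧ g < 2 * a ∧ a < g := by
    intro a ha
    obtain ⟨haS, h1, h2⟩ := hA ha
    rw [← hgF] at h1 h2
    refine ⟨haS, ?_, ?_⟩ <;> omega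
  have hAfin : A.Finite := Set.Finite.subset (Set.finite_Iio g) (fun a ha => (hAprop a ha).2.2)
  have hgT : g ∉ T := fun hmem => hg hmem.1
  have h0T : (0 : ℕ) ∈ T := ⟨h0S, fun h0A => by have := (hAprop 0 h0A).2.1; omega⟩
  have hFT : frobNS T = (g : ℤ) := by
    refine frob_eq hT hgT ?_
    intro x hx
    by_cases hxS : x ∈ S
    · have hxA : x ∈ A := by
        by_contra hxA
        exact hx ⟨hxS, hxA⟩
      exact le_of_lt (hAprop x hxA).2.2
    · have := hgF ▸ gap_le_frob hS hxS
      exact_mod_cast this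
  -- gaps paired with A are gaps of S
  have hgap : ∀ a ∈ A, g - a ∉ S := by
    intro a ha hmem
    obtain ⟨haS, _, halt⟩ := hAprop a ha
    have : a + (g - a) ∈ S := hS.2.1 a haS _ hmem
    rw [Nat.add_sub_cancel' (le_of_lt halt)] at this
    exact hg this
  -- characterize LgapsNS T
  have hLeq : LgapsNS T = A ∪ (fun a => g - a) '' A := by
    ext x
    simp only [LgapsNS, toZNS, smallNS, Set.mem_setOf_eq, hFT, Set.mem_union, Set.mem_image,
      Set.mem_setOf_eq]
    constructor
    · rintro ⟨hxT, hxL⟩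
      by_cases hxA : x ∈ A
      · exact Or.inl hxA
      have hxS : x ∉ S := fun hxS => hxT ⟨hxS, hxA⟩
      have hxg : x ≠ g := by
        rintro rfl
        exact hxL ⟨0, ⟨h0T, by push_cast; omega⟩, by push_cast; omega⟩
      have hx1 : x ≠ 0 := fun h => hxS (h ▸ h0S)
      have hxle : (x : ℤ) ≤ (g : ℤ) := hgF ▸ gap_le_frob hS hxS
      obtain ⟨y, hyS, hyeq⟩ := hsym x hxS
      rw [← hgF] at hyeq
      by_cases hyA : y ∈ A
      · refine Or.inr ⟨y, hyA, ?_⟩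
        have : (y : ℤ) ≤ (g : ℤ) := by omega
        omega
      · exfalso
        refine hxL ⟨y, ⟨⟨hyS, hyA⟩, ?_⟩, hyeq⟩
        have : (0 : ℤ) < (x : ℤ) := by positivity
        omega
    · rintro (hxA | ⟨a, haA, rfl⟩)
      · obtain ⟨hxS, hlt, hlt2⟩ := hAprop x hxA
        refine ⟨fun hmem => hmem.2 hxA, ?_⟩
        rintro ⟨y, ⟨hyT, hylt⟩, hyeq⟩
        have hyval : y = g - x := by omega
        exact hgap x hxA (hyval ▸ hyT.1)
      · obtain ⟨haS, hlt, hlt2⟩ := hAprop a haA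
        have hgaS : g - a ∉ S := hgap a haA
        refine ⟨fun hmem => hgaS hmem.1, ?_⟩
        rintro ⟨y, ⟨hyT, hylt⟩, hyeq⟩
        have : (y : ℤ) = (a : ℤ) := by push_cast at hyeq ⊢; omega
        have : y = a := by exact_mod_cast this
        exact hyT.2 (this ▸ haA)
  -- cardinality
  have hdisj : Disjoint A ((fun a => g - a) '' A) := by
    rw [Set.disjoint_left]
    rintro x hxA ⟨a, haA, hxa⟩
    have hxa' : g - a = x := hxa
    subst hxa'
    have h1 := (hAprop _ hxA).2
    have h2 := (hAprop a haA).2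
    omega
  have hinj : Set.InjOn (fun a => g - a) A := by
    intro a ha b hb hab
    have h1 := (hAprop a ha).2
    have h2 := (hAprop b hb).2
    have hab' : g - a = g - b := hab
    omega
  rw [lNS, hLeq, Set.ncard_union_eq hdisj hAfin (hAfin.image _),
    Set.ncard_image_of_injOn hinj, hcard]
  omega

private lemma part2 {T : Set ℕ} {n : ℕ} (hT : IsNumericalSemigroup T) (hl : lNS T = 2 * n) :
    ∃ S A : Set ℕ, IsSymmetricNS S ∧ frobNS S = frobNS T ∧
      A ⊆ {x ∈ S | frobNS S < 2 * (x : ℤ) ∧ (x : ℤ) < frobNS S} ∧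
      A.ncard = n ∧ T = S \ A := by
  have h0T : (0 : ℕ) ∈ T := hT.1
  rcases frob_spec_s12 hT with huniv | ⟨g, hg, hgF⟩
  · -- T = univ
    subst huniv
    have hL : LgapsNS (Set.univ : Set ℕ) = ∅ := by
      rw [Set.eq_empty_iff_forall_notMem]
      intro x hx
      exact hx.1 trivial
    rw [lNS, hL, Set.ncard_empty] at hl
    refine ⟨Set.univ, ∅, ⟨irreducible_of_symP ⟨h0T, fun a _ b _ => trivial, by simp⟩
      (fun x hx => absurd trivial hx), ?_⟩, rfl, Set.empty_subset _, ?_, by simp⟩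
    · rw [frob_univ]; exact ⟨-1, by ring⟩
    · rw [Set.ncard_empty]; omega
  -- main case
  have hg1 : 1 ≤ g := Nat.pos_of_ne_zero (fun hz => hg (hz ▸ h0T))
  set L : Set ℕ := LgapsNS T with hLdef
  have hLfin : L.Finite := hT.2.2.subset (fun x hx => hx.1)
  -- basic structure of L
  have hLmem : ∀ x ∈ L, x ∉ T ∧ 1 ≤ x ∧ x < g := by
    intro x hx
    obtain ⟨hxT, hxL⟩ := hx
    have hx1 : x ≠ 0 := fun h => hxT (h ▸ h0T)
    have hxle : (x : ℤ) ≤ (g : ℤ) := hgF ▸ gap_le_frob hT hxT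
    have hxg : x ≠ g := by
      rintro rfl
      exact hxL ⟨0, ⟨h0T, by rw [← hgF]; push_cast; omega⟩, by rw [← hgF]; push_cast; omega⟩
    refine ⟨hxT, by omega, by omega⟩
  have hLpair : ∀ x ∈ L, g - x ∈ L := by
    intro x hx
    obtain ⟨hxT, hx1, hxlt⟩ := hLmem x hx
    have hgxT : g - x ∉ T := by
      intro hmem
      exact hx.2 ⟨g - x, ⟨hmem, by rw [← hgF]; push_cast; omega⟩, by rw [← hgF]; push_cast; omega⟩
    refine ⟨hgxT, ?_⟩
    rintro ⟨y, ⟨hyT, hylt⟩, hyeq⟩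
    rw [← hgF] at hyeq
    have : (y : ℤ) = (x : ℤ) := by push_cast at hyeq ⊢; omega
    have : y = x := by exact_mod_cast this
    exact hxT (this ▸ hyT)
  -- split L
  set A : Set ℕ := {x ∈ L | g < 2 * x} with hAdef
  set B : Set ℕ := {x ∈ L | 2 * x < g} with hBdef
  have hAfin : A.Finite := hLfin.subset (fun x hx => hx.1)
  have hBfin : B.Finite := hLfin.subset (fun x hx => hx.1)
  have hBimg : B = (fun a => g - a) '' A := by
    ext x
    constructor
    · rintro ⟨hxL, hxlt⟩
      obtain ⟨_, hx1, hxg⟩ := hLmem x hxL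
      refine ⟨g - x, ⟨hLpair x hxL, by omega⟩, by simp; omega⟩
    · rintro ⟨a, ⟨haL, halt⟩, hax⟩
      have hax' : g - a = x := hax
      obtain ⟨_, ha1, hag⟩ := hLmem a haL
      subst hax'
      exact ⟨hLpair a haL, by omega⟩
  have hinj : Set.InjOn (fun a => g - a) A := by
    intro a ha b hb hab
    have hab' : g - a = g - b := hab
    have h1 := (hLmem a ha.1).2
    have h2 := (hLmem b hb.1).2
    omega
  have hABdisj : Disjoint A B := by
    rw [Set.disjoint_left]
    rintro x ⟨_, h1⟩ ⟨_, h2⟩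
    omega
  -- g is odd
  have hgodd : g % 2 = 1 := by
    by_contra hpar
    set c : ℕ := g / 2 with hcdef
    have hc2 : 2 * c = g := by omega
    have hcT : c ∉ T := by
      intro hmem
      have := hT.2.1 c hmem c hmem
      rw [show c + c = g by omega] at this
      exact hg this
    have hcL : c ∈ L := by
      refine ⟨hcT, ?_⟩
      rintro ⟨y, ⟨hyT, hylt⟩, hyeq⟩
      rw [← hgF] at hyeq
      have : (y : ℤ) = (c : ℤ) := by push_cast at hyeq ⊢; omega
      have : y = c := by exact_mod_cast this
      exact hcT (this ▸ hyT)
    have hLsplit : L = (A ∪ B) ∪ {c} := by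
      ext x
      simp only [Set.mem_union, Set.mem_singleton_iff, hAdef, hBdef, Set.mem_setOf_eq]
      constructor
      · intro hx
        by_cases h1 : g < 2 * x
        · exact Or.inl (Or.inl ⟨hx, h1⟩)
        by_cases h2 : 2 * x < g
        · exact Or.inl (Or.inr ⟨hx, h2⟩)
        · exact Or.inr (by omega)
      · rintro ((h | h) | rfl)
        · exact h.1
        · exact h.1
        · exact hcL
    have hdisj2 : Disjoint (A ∪ B) {c} := by
      rw [Set.disjoint_left]
      rintro x (⟨_, h1⟩ | ⟨_, h1⟩) (rfl : x = c) <;> omega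
    have hcard : L.ncard = A.ncard + B.ncard + 1 := by
      rw [hLsplit, Set.ncard_union_eq hdisj2 (hAfin.union hBfin) (Set.finite_singleton c),
        Set.ncard_union_eq hABdisj hAfin hBfin, Set.ncard_singleton]
    have hBA : B.ncard = A.ncard := by rw [hBimg, Set.ncard_image_of_injOn hinj]
    rw [lNS, ← hLdef] at hl
    omega
  -- with g odd : L = A ∪ B, |A| = n
  have hLsplit : L = A ∪ B := by
    ext x
    simp only [Set.mem_union, hAdef, hBdef, Set.mem_setOf_eq]
    constructor
    · intro hx
      rcases Nat.lt_trichotomy (2 * x) g with h | h | h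
      · exact Or.inr ⟨hx, h⟩
      · omega
      · exact Or.inl ⟨hx, h⟩
    · rintro (h | h) <;> exact h.1
  have hAcard : A.ncard = n := by
    have hBA : B.ncard = A.ncard := by rw [hBimg, Set.ncard_image_of_injOn hinj]
    rw [lNS, ← hLdef, hLsplit, Set.ncard_union_eq hABdisj hAfin hBfin] at hl
    omega
  -- the symmetric semigroup S
  set S : Set ℕ := T ∪ A with hSdef
  have hclosA : ∀ a ∈ A, ∀ t ∈ T, a + t ∈ S := by
    rintro a ⟨haL, halt⟩ t ht
    obtain ⟨haT, ha1, hag⟩ := hLmem a haL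
    rcases Nat.eq_zero_or_pos t with rfl | htpos
    · exact Or.inr ⟨haL, halt⟩
    by_cases hmem : a + t ∈ T
    · exact Or.inl hmem
    refine Or.inr ⟨⟨hmem, ?_⟩, by omega⟩
    rintro ⟨y, ⟨hyT, hylt⟩, hyeq⟩
    rw [← hgF] at hyeq
    refine haL.2 ⟨y + t, ⟨hT.2.1 y hyT t ht, ?_⟩, ?_⟩ <;> rw [← hgF] <;> push_cast <;>
      push_cast at hyeq <;> omega
  have hSns : IsNumericalSemigroup S := by
    refine ⟨Or.inl h0T, ?_, hT.2.2.subset (by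
      intro x hx
      simp only [Set.mem_compl_iff, hSdef, Set.mem_union, not_or] at hx ⊢
      exact hx.1)⟩
    rintro a (haT | haA) b (hbT | hbA)
    · exact Or.inl (hT.2.1 a haT b hbT)
    · rw [Nat.add_comm]; exact hclosA b hbA a haT
    · exact hclosA a haA b hbT
    · refine Or.inl (mem_of_frob_lt hT ?_)
      have h1 := hbA.2
      have h2 := haA.2
      rw [← hgF]; push_cast; omega
  have hgA : g ∉ A := fun h => by have := (hLmem g h.1).2.2; omega
  have hgS : g ∉ S := by rintro (h | h); exacts [hg h, hgA h]
  have hFS : frobNS S = (g : ℤ) := by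
    refine frob_eq hSns hgS ?_
    intro x hx
    have hxT : x ∉ T := fun h => hx (Or.inl h)
    have := hgF ▸ gap_le_frob hT hxT
    exact_mod_cast this
  have hsymP : SymP S := by
    intro x hx
    have hxT : x ∉ T := fun h => hx (Or.inl h)
    have hxA : x ∉ A := fun h => hx (Or.inr h)
    have hxle : (x : ℤ) ≤ (g : ℤ) := hgF ▸ gap_le_frob hT hxT
    have hxle' : x ≤ g := by exact_mod_cast hxle
    rcases eq_or_lt_of_le hxle' with rfl | hxlt
    · exact ⟨0, Or.inl h0T, by rw [hFS]; push_cast; omega⟩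
    by_cases hxL : x ∈ L
    · have h2x : 2 * x < g := by
        have : ¬ g < 2 * x := fun h => hxA ⟨hxL, h⟩
        omega
      have hgx : g - x ∈ A := ⟨hLpair x hxL, by omega⟩
      exact ⟨g - x, Or.inr hgx, by rw [hFS]; push_cast; omega⟩
    · rw [hLdef, LgapsNS, Set.mem_setOf_eq, not_and] at hxL
      have := hxL hxT
      rw [not_not] at this
      obtain ⟨y, ⟨hyT, hylt⟩, hyeq⟩ := this
      exact ⟨y, Or.inl hyT, by rw [hFS, ← hgF] at *; omega⟩
  refine ⟨S, A, ⟨irreducible_of_symP hSns hsymP, ?_⟩, by rw [hFS, hgF], ?_, hAcard, ?_⟩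
  · rw [hFS]
    exact ⟨(g : ℤ) / 2, by omega⟩
  · rintro x hxA
    obtain ⟨_, hx1, hxg⟩ := hLmem x hxA.1
    have h2x := hxA.2
    refine ⟨Or.inr hxA, ?_, ?_⟩ <;> rw [hFS] <;> push_cast <;> omega
  · -- T = S \ A
    have hAT : ∀ x ∈ A, x ∉ T := fun x hx => (hLmem x hx.1).1
    ext x
    constructor
    · intro hxT
      exact ⟨Or.inl hxT, fun hxA => hAT x hxA hxT⟩
    · rintro ⟨hxS | hxA, hxA'⟩
      · exact hxS
      · exact absurd hxA hxA'

/-- (1) If S is symmetric and A ⊆ {x ∈ S : F(S)/2 < x < F(S)} has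
cardinality n with S∖A a numerical semigroup, then l(S∖A) = 2n. (2) Every numerical
semigroup T with l(T) = 2n arises this way (with F(S) = F(T)). -/
theorem stmt12 (n : ℕ) :
    (∀ S A : Set ℕ, IsSymmetricNS S →
      A ⊆ {x ∈ S | frobNS S < 2 * (x : ℤ) ∧ (x : ℤ) < frobNS S} →
      A.ncard = n → IsNumericalSemigroup (S \ A) →
      lNS (S \ A) = 2 * n) ∧
    (∀ T : Set ℕ, IsNumericalSemigroup T → lNS T = 2 * n →
      ∃ S A : Set ℕ, IsSymmetricNS S ∧ frobNS S = frobNS T ∧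
        A ⊆ {x ∈ S | frobNS S < 2 * (x : ℤ) ∧ (x : ℤ) < frobNS S} ∧
        A.ncard = n ∧ T = S \ A) := by
  exact ⟨fun S A hs hA hc hT => part1 hs hA hc hT, fun T hT hl => part2 hT hl⟩
end

section
/- Let S be a numerical semigroup. If l(S) is odd, then F(S) is even. -/
/-- If l(S) is odd, then F(S) is even. -/
theorem stmt15 (S : Set ℕ) (hS : IsNumericalSemigroup S) (h : Odd (lNS S)) :
    Even (frobNS S) := by
  by_contra hodd
  rw [Int.not_even_iff_odd] at hodd
  have hLfin : (LgapsNS S).Finite := hS.2.2.subset fun x hx => hx.1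
  rcases Set.eq_empty_or_nonempty Sᶜ with hc | hc
  · have hL : LgapsNS S = ∅ := by
      ext x
      simp only [LgapsNS, Set.mem_setOf_eq, Set.mem_empty_iff_false, iff_false, not_and]
      intro hx
      exact absurd hx (by simpa using Set.eq_empty_iff_forall_notMem.mp hc x)
    rw [lNS, hL, Set.ncard_empty] at h
    simp at h
  · set F := frobNS S with hFdef
    have hCfin : (insert (-1) ((fun n : ℕ => (n : ℤ)) '' Sᶜ)).Finite :=
      ((hS.2.2.image _).insert _)
    have hFmem : F ∈ insert (-1) ((fun n : ℕ => (n : ℤ)) '' Sᶜ) :=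
      Set.Nonempty.csSup_mem (by simp) hCfin
    have hle : ∀ x : ℕ, x ∉ S → (x : ℤ) ≤ F := fun x hx =>
      le_csSup hCfin.bddAbove (Or.inr ⟨x, hx, rfl⟩)
    obtain ⟨x0, hx0⟩ := hc
    have hx0' : 1 ≤ x0 := by
      rcases Nat.eq_zero_or_pos x0 with h0 | h0
      · exact absurd (h0 ▸ hS.1) hx0
      · exact h0
    have hF1 : (1 : ℤ) ≤ F := le_trans (by exact_mod_cast hx0') (hle x0 hx0)
    set f := F.toNat with hfdef
    have hfF : (f : ℤ) = F := Int.toNat_of_nonneg (by omega)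
    have hfodd : Odd f := by
      rcases hodd with ⟨k, hk⟩
      exact ⟨k.toNat, by omega⟩
    -- key lemma
    have key : ∀ x ∈ LgapsNS S, 1 ≤ x ∧ x ≤ f ∧ f - x ∈ LgapsNS S := by
      intro x hx
      obtain ⟨hxS, hxL⟩ := hx
      have hx1 : 1 ≤ x := by
        rcases Nat.eq_zero_or_pos x with h0 | h0
        · exact absurd (h0 ▸ hS.1) hxS
        · exact h0
      have hxf : x ≤ f := by
        have := hle x hxS; omega
      refine ⟨hx1, hxf, ?_, ?_⟩
      · -- f - x ∉ S
        intro hmem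
        apply hxL
        refine ⟨f - x, ⟨hmem, ?_⟩, ?_⟩
        · omega
        · omega
      · -- F - (f - x) ∉ toZNS (smallNS S)
        rintro ⟨n, ⟨hnS, _⟩, hn⟩
        have : (n : ℤ) = (x : ℤ) := by omega
        have : n = x := by exact_mod_cast this
        exact hxS (this ▸ hnS)
    set A := {x ∈ LgapsNS S | 2 * x < f} with hAdef
    set B := {x ∈ LgapsNS S | f < 2 * x} with hBdef
    have hsplit : LgapsNS S = A ∪ B := by
      ext x
      constructor
      · intro hx
        have h2 : 2 * x ≠ f := by
          intro he
          rcases hfodd with ⟨k, hk⟩; omega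
        rcases lt_or_gt_of_ne h2 with hlt | hgt
        · exact Or.inl ⟨hx, hlt⟩
        · exact Or.inr ⟨hx, hgt⟩
      · rintro (⟨hx, _⟩ | ⟨hx, _⟩) <;> exact hx
    have hdisj : Disjoint A B := by
      rw [Set.disjoint_left]
      rintro x ⟨_, h1⟩ ⟨_, h2⟩
      omega
    have hB : B = (fun x => f - x) '' A := by
      ext y
      constructor
      · rintro ⟨hy, hy2⟩
        obtain ⟨hy1, hyf, hyL⟩ := key y hy
        refine ⟨f - y, ⟨hyL, by omega⟩, ?_⟩
        show f - (f - y) = y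
        omega
      · rintro ⟨x, ⟨hx, hx2⟩, rfl⟩
        obtain ⟨hx1, hxf, hxL⟩ := key x hx
        exact ⟨hxL, show f < 2 * (f - x) by omega⟩
    have hAfin : A.Finite := hLfin.subset fun x hx => hx.1
    have hinj : Set.InjOn (fun x => f - x) A := by
      rintro x ⟨hx, hx2⟩ y ⟨hy, hy2⟩ hxy
      have := (key x hx).2.1
      have := (key y hy).2.1
      simp only at hxy
      omega
    have hcard : lNS S = 2 * A.ncard := by
      rw [lNS, hsplit, Set.ncard_union_eq hdisj hAfin (hLfin.subset fun x hx => hx.1),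
        hB, Set.ncard_image_of_injOn hinj]
      ring
    rw [hcard] at h
    rcases h with ⟨c, hc⟩
    omega
end
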